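/- arXiv:1608.00997 — 13 statements merged into one kernel-verified Lean document; each statement's English description precedes it below -/
import Mathlib

section
/- Let Γ be an ordered abelian group, S ⊆ Γ, α ∈ Γ, and n ≥ 1. Then S is jammed in Γ if and only if the affine transform α + nS is jammed in Γ. -/
/-- A subset `S` of an ordered abelian group is jammed: it is nonempty, has no greatest
element, and for every nontrivial convex subgroup `Δ` there is `γ₀ ∈ S` such that every
`γ₁ ∈ S` with `γ₁ > γ₀` satisfies `γ₁ - γ₀ ∈ Δ`. -/
def IsJammed {Γ : Type*} [AddCommGroup Γ] [LinearOrder Γ] [IsOrderedAddMonoid Γ] (S : Set Γ) : Prop :=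
  S.Nonempty ∧ (¬ ∃ m ∈ S, ∀ x ∈ S, x ≤ m) ∧
    ∀ Δ : AddSubgroup Γ,
      (∀ a ∈ Δ, ∀ b ∈ Δ, ∀ c : Γ, a ≤ c → c ≤ b → c ∈ Δ) → Δ ≠ ⊥ →
      ∃ γ₀ ∈ S, ∀ γ₁ ∈ S, γ₀ < γ₁ → γ₁ - γ₀ ∈ Δ

/-!
A strictly increasing map `f` that, on increasing pairs, preserves membership of differences in
every convex subgroup carries jammed sets exactly to jammed sets. The affine map `γ ↦ α + n • γ`
is such a map: `(α + n • y) - (α + n • x) = n • (y - x)`, and for `0 ≤ d` the element `d` lies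
between `0` and `n • d`, so a convex subgroup contains `n • d` iff it contains `d`.
-/

section

variable {Γ : Type*} [AddCommGroup Γ] [LinearOrder Γ] [IsOrderedAddMonoid Γ]

theorem AddSubgroup.nsmul_mem_iff_of_ordConnected {Δ : AddSubgroup Γ}
    (hΔ : (Δ : Set Γ).OrdConnected) {n : ℕ} (hn : n ≠ 0) {d : Γ} (hd : 0 ≤ d) :
    n • d ∈ Δ ↔ d ∈ Δ :=
  ⟨fun h => hΔ.out Δ.zero_mem h ⟨hd, le_self_nsmul hd hn⟩, fun h => Δ.nsmul_mem h n⟩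

theorem isJammed_image_iff {f : Γ → Γ} (hf : StrictMono f)
    (hfΔ : ∀ Δ : AddSubgroup Γ, (Δ : Set Γ).OrdConnected →
      ∀ x y, x < y → (f y - f x ∈ Δ ↔ y - x ∈ Δ))
    (S : Set Γ) : IsJammed (f '' S) ↔ IsJammed S := by
  simp only [IsJammed, Set.image_nonempty, Set.exists_mem_image, Set.forall_mem_image,
    hf.le_iff_le, hf.lt_iff_lt]
  refine and_congr_right' (and_congr_right' (forall_congr' fun Δ => forall_congr' fun hΔ => ?_))
  have hΔ' : (Δ : Set Γ).OrdConnected := ⟨fun a ha b hb c hc => hΔ a ha b hb c hc.1 hc.2⟩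
  exact imp_congr_right fun _ => exists_congr fun x => and_congr_right' <| forall_congr' fun y =>
    imp_congr_right fun _ => forall_congr' fun hxy => hfΔ Δ hΔ' x y hxy

end

/-- `S` is jammed in `Γ` iff the affine transform `α + nS` is jammed in `Γ`. -/
theorem stmt_1 {Γ : Type*} [AddCommGroup Γ] [LinearOrder Γ] [IsOrderedAddMonoid Γ]
    (S : Set Γ) (α : Γ) (n : ℕ) (hn : 1 ≤ n) :
    IsJammed S ↔ IsJammed ((fun γ => α + n • γ) '' S) := by
  have hn0 : n ≠ 0 := Nat.one_le_iff_ne_zero.mp hn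
  refine (isJammed_image_iff (fun x y hxy => add_lt_add_right (nsmul_right_strictMono hn0 hxy) α)
    (fun Δ hΔ x y hxy => ?_) S).symm
  rw [add_sub_add_left_eq_sub, ← nsmul_sub]
  exact Δ.nsmul_mem_iff_of_ordConnected hΔ hn0 (sub_nonneg.mpr hxy.le)
end

section
/- Let Γ and Γ₁ be ordered abelian groups with Γ an ordered subgroup of Γ₁ such that the set of archimedean classes [Γ] is coinitial in [Γ₁] (i.e., for every nonzero g ∈ Γ₁ there is a nonzero h ∈ Γ with [h] ≤ [g]). Then a subset S ⊆ Γ is jammed in Γ if and only if S is jammed in Γ₁. -/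
/-! For an order embedding `f`, the set `f '' S` is eventually constant modulo `Δ₁` iff `S` is
eventually constant modulo `Δ₁.comap f`. The pullback of a nontrivial convex subgroup `Δ₁` of `Γ₁`
is convex, and nontrivial by coinitiality: if `0 ≠ g ∈ Δ₁` and `|f h| ≤ n • |g|`, then `f h ∈ Δ₁`.
Conversely, every convex subgroup `Δ` of `Γ` is the pullback of the convex hull of `f '' Δ`. -/

open Set AddSubgroup

theorem AddSubgroup.mem_of_abs_le_abs {G : Type*} [AddCommGroup G] [LinearOrder G]
    [IsOrderedAddMonoid G] {Δ : AddSubgroup G} (hΔ : OrdConnected (Δ : Set G)) {x c : G}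
    (hx : x ∈ Δ) (hc : |c| ≤ |x|) : c ∈ Δ :=
  hΔ.out (neg_mem (abs_mem_iff.2 hx)) (abs_mem_iff.2 hx) (abs_le.1 hc)

namespace AddSubgroup

variable {G H : Type*} [AddCommGroup G] [AddCommGroup H] [LinearOrder H] [IsOrderedAddMonoid H]

theorem comap_ne_bot_of_abs_le_nsmul (f : G →+ H) {Δ : AddSubgroup H}
    (hΔ : OrdConnected (Δ : Set H)) {g : H} (hg : g ∈ Δ) {h : G} (hh : h ≠ 0) {n : ℕ}
    (hle : |f h| ≤ n • |g|) : Δ.comap f ≠ ⊥ := by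
  have hfh : f h ∈ Δ :=
    mem_of_abs_le_abs hΔ (nsmul_mem (abs_mem_iff.2 hg) n)
      (hle.trans_eq (abs_of_nonneg (nsmul_nonneg (abs_nonneg g) n)).symm)
  exact ne_bot_iff_exists_ne_zero.2 ⟨⟨h, hfh⟩, fun h0 => hh (congrArg Subtype.val h0)⟩

/-- For `f` monotone and `Δ` convex, this is the convex subgroup generated by `f '' Δ`. -/
def convexMap (f : G →+ H) (Δ : AddSubgroup G) : AddSubgroup H where
  carrier := {g | ∃ d ∈ Δ, |g| ≤ f d}
  zero_mem' := ⟨0, Δ.zero_mem, by simp⟩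
  add_mem' := by
    rintro a b ⟨d, hd, had⟩ ⟨e, he, hbe⟩
    refine ⟨d + e, Δ.add_mem hd he, (abs_add_le a b).trans ?_⟩
    simpa using add_le_add had hbe
  neg_mem' := by
    rintro a ⟨d, hd, had⟩
    exact ⟨d, hd, by rwa [abs_neg]⟩

theorem ordConnected_convexMap (f : G →+ H) (Δ : AddSubgroup G) :
    OrdConnected (convexMap f Δ : Set H) := by
  refine ⟨fun a ⟨d, hd, had⟩ b ⟨e, he, hbe⟩ c hc => ⟨d + e, Δ.add_mem hd he, ?_⟩⟩
  calc |c| ≤ max |a| |b| := abs_le_max_abs_abs hc.1 hc.2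
    _ ≤ f d + f e := max_le (le_add_of_le_of_nonneg had ((abs_nonneg b).trans hbe))
        (le_add_of_nonneg_of_le ((abs_nonneg a).trans had) hbe)
    _ = f (d + e) := (map_add f d e).symm

theorem comap_convexMap [LinearOrder G] {f : G →+ H} (hf : StrictMono f) {Δ : AddSubgroup G}
    (hΔ : OrdConnected (Δ : Set G)) : (convexMap f Δ).comap f = Δ := by
  ext x
  refine ⟨fun ⟨d, hd, hxd⟩ => ?_, fun hx => ⟨|x|, abs_mem_iff.2 hx, ?_⟩⟩
  · refine hΔ.out (neg_mem hd) hd ⟨?_, ?_⟩ <;> rw [← hf.le_iff_le]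
    · simpa using neg_le_of_abs_le hxd
    · exact le_of_abs_le hxd
  · rw [abs_eq_max_neg, abs_eq_max_neg, hf.monotone.map_max, map_neg]

theorem convexMap_ne_bot [LinearOrder G] {f : G →+ H} (hf : StrictMono f) {Δ : AddSubgroup G}
    (hΔ : OrdConnected (Δ : Set G)) (hne : Δ ≠ ⊥) : convexMap f Δ ≠ ⊥ := by
  rintro hbot
  rw [← comap_convexMap hf hΔ, hbot, AddMonoidHom.comap_bot] at hne
  exact hne ((AddMonoidHom.ker_eq_bot_iff f).2 hf.injective)

end AddSubgroup

def Set.EventuallyConstMod {G : Type*} [AddGroup G] [Preorder G] (S : Set G)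
    (Δ : AddSubgroup G) : Prop :=
  ∃ γ₀ ∈ S, ∀ γ₁ ∈ S, γ₀ < γ₁ → γ₁ - γ₀ ∈ Δ

theorem Set.eventuallyConstMod_image_iff {G H : Type*} [AddGroup G] [LinearOrder G]
    [AddGroup H] [Preorder H] {f : G →+ H} (hf : StrictMono f) {S : Set G} {Δ : AddSubgroup H} :
    (f '' S).EventuallyConstMod Δ ↔ S.EventuallyConstMod (Δ.comap f) := by
  simp [Set.EventuallyConstMod, hf.lt_iff_lt]

theorem isJammed_iff {G : Type*} [AddCommGroup G] [LinearOrder G] [IsOrderedAddMonoid G]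
    {S : Set G} : IsJammed S ↔ S.Nonempty ∧ (¬ ∃ m ∈ S, ∀ x ∈ S, x ≤ m) ∧
      ∀ Δ : AddSubgroup G, OrdConnected (Δ : Set G) → Δ ≠ ⊥ → S.EventuallyConstMod Δ := by
  have hconv (Δ : AddSubgroup G) : OrdConnected (Δ : Set G) ↔
      ∀ a ∈ Δ, ∀ b ∈ Δ, ∀ c : G, a ≤ c → c ≤ b → c ∈ Δ :=
    ⟨fun h a ha b hb c hac hcb => h.out ha hb ⟨hac, hcb⟩,
      fun h => ⟨fun a ha b hb c hc => h a ha b hb c hc.1 hc.2⟩⟩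
  simp only [IsJammed, hconv, Set.EventuallyConstMod]

/-- Let `Γ` be an ordered subgroup of `Γ₁` (via an order embedding `f`) such
that the archimedean classes of `Γ` are coinitial in those of `Γ₁`: for every nonzero
`g ∈ Γ₁` there is a nonzero `h ∈ Γ` with `[f h] ≤ [g]`, i.e. `|f h| ≤ n|g|` for some
`n ≥ 1`. Then `S ⊆ Γ` is jammed in `Γ` iff (its image) is jammed in `Γ₁`. -/
theorem stmt_4 {Γ Γ₁ : Type*} [AddCommGroup Γ] [LinearOrder Γ] [IsOrderedAddMonoid Γ]
    [AddCommGroup Γ₁] [LinearOrder Γ₁] [IsOrderedAddMonoid Γ₁]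
    (f : Γ →+ Γ₁) (hf : ∀ x y : Γ, x ≤ y ↔ f x ≤ f y)
    (hcoin : ∀ g : Γ₁, g ≠ 0 → ∃ h : Γ, h ≠ 0 ∧ ∃ n : ℕ, 1 ≤ n ∧ |f h| ≤ n • |g|)
    (S : Set Γ) :
    IsJammed S ↔ IsJammed (f '' S) := by
  have hmono : StrictMono f :=
    (OrderEmbedding.ofMapLEIff f fun x y => (hf x y).symm).strictMono
  simp only [isJammed_iff, image_nonempty, exists_mem_image, forall_mem_image, ← hf,
    Set.eventuallyConstMod_image_iff hmono]
  refine and_congr_right fun _ => and_congr_right fun _ =>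
    ⟨fun hS Δ₁ hΔ₁ hne => ?_, fun hS Δ hΔ hne => ?_⟩
  · obtain ⟨g, hg, hg0⟩ := Δ₁.bot_or_exists_ne_zero.resolve_left hne
    obtain ⟨h, hh, n, -, hle⟩ := hcoin g hg0
    exact hS _ (hΔ₁.preimage_mono hmono.monotone) (comap_ne_bot_of_abs_le_nsmul f hΔ₁ hg hh hle)
  · exact comap_convexMap hmono hΔ ▸
      hS _ (ordConnected_convexMap f Δ) (convexMap_ne_bot hmono hΔ hne)
end

section
/- Let (Γ, ψ) be an asymptotic couple. Then the map γ ↦ γ′ := γ + ψ(γ) from Γ∖{0} to Γ is strictly increasing. In particular, (Γ^{<0})′ < (Γ^{>0})′ elementwise, and for each β ∈ Γ there is at most one α ∈ Γ∖{0} with α′ = β. -/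
/-! Write `β = α + γ` with `γ > 0`. By (AC1), `ψ β ≥ min (ψ α) (ψ γ)`, and both candidates for the
minimum exceed `ψ α - γ`: trivially for `ψ α`, and by (AC3) for `ψ γ`. Hence `ψ α < γ + ψ β`,
which is `α' < β'`. -/

section AsymptoticCouple

variable {Γ : Type*} [AddCommGroup Γ] [LinearOrder Γ] [IsOrderedAddMonoid Γ] {ψ : Γ → Γ}

lemma psi_lt_add_psi_add
    (AC1 : ∀ α β : Γ, α ≠ 0 → β ≠ 0 → α + β ≠ 0 → min (ψ α) (ψ β) ≤ ψ (α + β))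
    (AC3 : ∀ α β : Γ, 0 < α → β ≠ 0 → ψ β < α + ψ α)
    {α γ : Γ} (hα : α ≠ 0) (hγ : 0 < γ) (hαγ : α + γ ≠ 0) :
    ψ α < γ + ψ (α + γ) := by
  rcases min_le_iff.mp (AC1 α γ hα hγ.ne' hαγ) with h | h
  · calc ψ α < γ + ψ α := lt_add_of_pos_left _ hγ
      _ ≤ γ + ψ (α + γ) := by gcongr
  · calc ψ α < γ + ψ γ := AC3 γ α hγ hα
      _ ≤ γ + ψ (α + γ) := by gcongr

lemma strictMonoOn_add_psi
    (AC1 : ∀ α β : Γ, α ≠ 0 → β ≠ 0 → α + β ≠ 0 → min (ψ α) (ψ β) ≤ ψ (α + β))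
    (AC3 : ∀ α β : Γ, 0 < α → β ≠ 0 → ψ β < α + ψ α) :
    StrictMonoOn (fun γ => γ + ψ γ) {0}ᶜ := by
  intro α hα β hβ hlt
  have key := psi_lt_add_psi_add AC1 AC3 hα (sub_pos.mpr hlt) (by simpa using hβ)
  rw [add_sub_cancel] at key
  calc α + ψ α < α + (β - α + ψ β) := by gcongr
    _ = β + ψ β := by abel

end AsymptoticCouple

theorem stmt_5_general {Γ : Type*} [AddCommGroup Γ] [LinearOrder Γ] [IsOrderedAddMonoid Γ] (ψ : Γ → Γ)
    (AC1 : ∀ α β : Γ, α ≠ 0 → β ≠ 0 → α + β ≠ 0 → min (ψ α) (ψ β) ≤ ψ (α + β))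
    (AC3 : ∀ α β : Γ, 0 < α → β ≠ 0 → ψ β < α + ψ α) :
    (∀ α β : Γ, α ≠ 0 → β ≠ 0 → α < β → α + ψ α < β + ψ β) ∧
    (∀ α β : Γ, α < 0 → 0 < β → α + ψ α < β + ψ β) ∧
    (∀ (β α₁ α₂ : Γ), α₁ ≠ 0 → α₂ ≠ 0 → α₁ + ψ α₁ = β → α₂ + ψ α₂ = β → α₁ = α₂) := by
  have mono := strictMonoOn_add_psi AC1 AC3
  exact ⟨fun α β hα hβ hlt => mono hα hβ hlt,
    fun α β hα hβ => mono hα.ne hβ.ne' (hα.trans hβ),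
    fun β α₁ α₂ h₁ h₂ e₁ e₂ => mono.injOn h₁ h₂ (e₁.trans e₂.symm)⟩

/-- In an asymptotic couple `(Γ, ψ)`, the map `γ ↦ γ' = γ + ψ γ` on
`Γ∖{0}` is strictly increasing; in particular `(Γ^{<0})' < (Γ^{>0})'` elementwise, and
for each `β` there is at most one nonzero `α` with `α' = β`. -/
theorem stmt_5 {Γ : Type*} [AddCommGroup Γ] [LinearOrder Γ] [IsOrderedAddMonoid Γ] (ψ : Γ → Γ)
    (AC1 : ∀ α β : Γ, α ≠ 0 → β ≠ 0 → α + β ≠ 0 → min (ψ α) (ψ β) ≤ ψ (α + β))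
    (AC2 : ∀ (α : Γ) (k : ℤ), α ≠ 0 → k ≠ 0 → ψ (k • α) = ψ α)
    (AC3 : ∀ α β : Γ, 0 < α → β ≠ 0 → ψ β < α + ψ α) :
    (∀ α β : Γ, α ≠ 0 → β ≠ 0 → α < β → α + ψ α < β + ψ β) ∧
    (∀ α β : Γ, α < 0 → 0 < β → α + ψ α < β + ψ β) ∧
    (∀ (β α₁ α₂ : Γ), α₁ ≠ 0 → α₂ ≠ 0 → α₁ + ψ α₁ = β → α₂ + ψ α₂ = β → α₁ = α₂) :=
  stmt_5_general ψ AC1 AC3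
end

section
/- Let (Γ, ψ) be an asymptotic couple with Ψ := ψ(Γ∖{0}) and (Γ^{>0})′ := {γ + ψ(γ) : γ ∈ Γ, γ > 0}. Then there is at most one β ∈ Γ with Ψ < β < (Γ^{>0})′ (elementwise). Moreover, if Ψ has a largest element, there is no such β. -/
/-! If `β' < β` and `β < (Γ^{>0})′`, then `γ := β - β' > 0` gives `β < γ + ψ γ`, that is
`β' < ψ γ ∈ Ψ`. So no element below a gap lies above `Ψ`: two gaps cannot be distinct, and
a largest element `ψ γ₀` of `Ψ` cannot lie below a gap. -/

namespace AsymptoticCouple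

variable {Γ : Type*} [AddCommGroup Γ] [LinearOrder Γ] [IsOrderedAddMonoid Γ] (ψ : Γ → Γ)

def IsGap (β : Γ) : Prop :=
  (∀ γ : Γ, γ ≠ 0 → ψ γ < β) ∧ ∀ γ : Γ, 0 < γ → β < γ + ψ γ

variable {ψ}

theorem lt_psi_sub_of_lt {β β' : Γ} (hβ : ∀ γ : Γ, 0 < γ → β < γ + ψ γ) (h : β' < β) :
    β' < ψ (β - β') := by
  have key : β - (β - β') < ψ (β - β') := sub_lt_iff_lt_add'.mpr (hβ _ (sub_pos.mpr h))
  rwa [sub_sub_cancel] at key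

theorem IsGap.le {β₁ β₂ : Γ} (h₁ : IsGap ψ β₁) (h₂ : IsGap ψ β₂) : β₁ ≤ β₂ :=
  not_lt.mp fun h => (h₂.1 _ (sub_pos.mpr h).ne').asymm (lt_psi_sub_of_lt h₁.2 h)

theorem IsGap.unique {β₁ β₂ : Γ} (h₁ : IsGap ψ β₁) (h₂ : IsGap ψ β₂) : β₁ = β₂ :=
  le_antisymm (h₁.le h₂) (h₂.le h₁)

theorem not_isGap_of_forall_psi_le {γ₀ : Γ} (hγ₀ : γ₀ ≠ 0) (hmax : ∀ γ : Γ, γ ≠ 0 → ψ γ ≤ ψ γ₀)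
    (β : Γ) : ¬ IsGap ψ β := fun h =>
  have hlt : ψ γ₀ < β := h.1 _ hγ₀
  (hmax _ (sub_pos.mpr hlt).ne').not_gt (lt_psi_sub_of_lt h.2 hlt)

end AsymptoticCouple

theorem stmt_6_general {Γ : Type*} [AddCommGroup Γ] [LinearOrder Γ] [IsOrderedAddMonoid Γ] (ψ : Γ → Γ) :
    (∀ β₁ β₂ : Γ,
      (∀ γ : Γ, γ ≠ 0 → ψ γ < β₁) → (∀ γ : Γ, 0 < γ → β₁ < γ + ψ γ) →
      (∀ γ : Γ, γ ≠ 0 → ψ γ < β₂) → (∀ γ : Γ, 0 < γ → β₂ < γ + ψ γ) → β₁ = β₂) ∧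
    ((∃ γ₀ : Γ, γ₀ ≠ 0 ∧ ∀ γ : Γ, γ ≠ 0 → ψ γ ≤ ψ γ₀) →
      ¬ ∃ β : Γ, (∀ γ : Γ, γ ≠ 0 → ψ γ < β) ∧ (∀ γ : Γ, 0 < γ → β < γ + ψ γ)) := by
  refine ⟨fun β₁ β₂ h₁l h₁u h₂l h₂u => AsymptoticCouple.IsGap.unique ⟨h₁l, h₁u⟩ ⟨h₂l, h₂u⟩, ?_⟩
  rintro ⟨γ₀, hγ₀, hmax⟩ ⟨β, hβ⟩
  exact AsymptoticCouple.not_isGap_of_forall_psi_le hγ₀ hmax β hβ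

/-- In an asymptotic couple `(Γ, ψ)` with `Ψ = ψ(Γ∖{0})`, there is at most
one `β` with `Ψ < β < (Γ^{>0})'` elementwise; and if `Ψ` has a largest element there is
no such `β`. -/
theorem stmt_6 {Γ : Type*} [AddCommGroup Γ] [LinearOrder Γ] [IsOrderedAddMonoid Γ] (ψ : Γ → Γ)
    (AC1 : ∀ α β : Γ, α ≠ 0 → β ≠ 0 → α + β ≠ 0 → min (ψ α) (ψ β) ≤ ψ (α + β))
    (AC2 : ∀ (α : Γ) (k : ℤ), α ≠ 0 → k ≠ 0 → ψ (k • α) = ψ α)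
    (AC3 : ∀ α β : Γ, 0 < α → β ≠ 0 → ψ β < α + ψ α) :
    (∀ β₁ β₂ : Γ,
      (∀ γ : Γ, γ ≠ 0 → ψ γ < β₁) → (∀ γ : Γ, 0 < γ → β₁ < γ + ψ γ) →
      (∀ γ : Γ, γ ≠ 0 → ψ γ < β₂) → (∀ γ : Γ, 0 < γ → β₂ < γ + ψ γ) → β₁ = β₂) ∧
    ((∃ γ₀ : Γ, γ₀ ≠ 0 ∧ ∀ γ : Γ, γ ≠ 0 → ψ γ ≤ ψ γ₀) →
      ¬ ∃ β : Γ, (∀ γ : Γ, γ ≠ 0 → ψ γ < β) ∧ (∀ γ : Γ, 0 < γ → β < γ + ψ γ)) :=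
  stmt_6_general ψ
end

section
/- Let (Γ, ψ) be an H-asymptotic couple with asymptotic integration, with successor function s and integration map ∫. Then for all α, β ∈ Γ: (1) ∫α = α − s(α); (2) if s(α) < s(β) then ψ(β − α) = s(α); (3) β = ψ(α − β) if and only if β = s(α); (4) s(α) < s(s(α)). -/
/-!
The map `γ ↦ γ + ψ γ` is strictly increasing on `Γ ∖ {0}` (by AC1 and AC3), so it is injective,
which gives (1) and (3). Item (2) comes from the ultrametric rule `ψ (x + y) = ψ x` when
`ψ x < ψ y`, applied twice to `β - α = (∫β - ∫α) + (s β - s α)`. For (4), AC3 shows that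
`∫ (s α)` is negative, and `γ < 0` means `γ + ψ γ < ψ γ`.
-/

theorem psi_neg {Γ : Type*} [AddGroup Γ] {ψ : Γ → Γ}
    (AC2 : ∀ (α : Γ) (k : ℤ), α ≠ 0 → k ≠ 0 → ψ (k • α) = ψ α)
    {x : Γ} (hx : x ≠ 0) : ψ (-x) = ψ x := by
  simpa using AC2 x (-1) hx (by norm_num)

theorem psi_add_eq_left_of_lt {Γ : Type*} [AddGroup Γ] [LinearOrder Γ] {ψ : Γ → Γ}
    (AC1 : ∀ α β : Γ, α ≠ 0 → β ≠ 0 → α + β ≠ 0 → min (ψ α) (ψ β) ≤ ψ (α + β))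
    (AC2 : ∀ (α : Γ) (k : ℤ), α ≠ 0 → k ≠ 0 → ψ (k • α) = ψ α)
    {x y : Γ} (hx : x ≠ 0) (hy : y ≠ 0) (hxy : ψ x < ψ y) : ψ (x + y) = ψ x := by
  have hsum : x + y ≠ 0 := by
    intro h
    rw [eq_neg_of_add_eq_zero_right h, psi_neg AC2 hx] at hxy
    exact hxy.false
  have hge : ψ x ≤ ψ (x + y) := by
    simpa [min_eq_left hxy.le] using AC1 x y hx hy hsum
  have hle : ψ (x + y) ≤ ψ x := by
    have h := AC1 (x + y) (-y) hsum (neg_ne_zero.mpr hy) (by simpa using hx)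
    rw [psi_neg AC2 hy, add_neg_cancel_right] at h
    exact (min_le_iff.mp h).resolve_right hxy.not_ge
  exact le_antisymm hle hge

section AsymptoticCouple

variable {Γ : Type*} [AddCommGroup Γ] [LinearOrder Γ] [IsOrderedAddMonoid Γ] {ψ : Γ → Γ}

theorem add_psi_lt_add_psi
    (AC1 : ∀ α β : Γ, α ≠ 0 → β ≠ 0 → α + β ≠ 0 → min (ψ α) (ψ β) ≤ ψ (α + β))
    (AC3 : ∀ α β : Γ, 0 < α → β ≠ 0 → ψ β < α + ψ α)
    {γ δ : Γ} (hγ : γ ≠ 0) (hδ : δ ≠ 0) (h : γ < δ) : γ + ψ γ < δ + ψ δ := by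
  rcases le_or_gt (ψ γ) (ψ δ) with hle | hlt
  · exact add_lt_add_of_lt_of_le h hle
  · have hpos : 0 < δ - γ := sub_pos.mpr h
    have h1 : ψ (δ - γ) ≤ ψ δ := by
      have := AC1 (δ - γ) γ hpos.ne' hγ (by simpa using hδ)
      rw [sub_add_cancel] at this
      exact (min_le_iff.mp this).resolve_right hlt.not_ge
    calc γ + ψ γ < γ + ((δ - γ) + ψ (δ - γ)) := add_lt_add_right (AC3 _ γ hpos hγ) γ
      _ ≤ γ + ((δ - γ) + ψ δ) := by gcongr
      _ = δ + ψ δ := by abel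

theorem eq_of_add_psi_eq_add_psi
    (AC1 : ∀ α β : Γ, α ≠ 0 → β ≠ 0 → α + β ≠ 0 → min (ψ α) (ψ β) ≤ ψ (α + β))
    (AC3 : ∀ α β : Γ, 0 < α → β ≠ 0 → ψ β < α + ψ α)
    {γ δ : Γ} (hγ : γ ≠ 0) (hδ : δ ≠ 0) (h : γ + ψ γ = δ + ψ δ) : γ = δ := by
  rcases lt_trichotomy γ δ with hlt | heq | hgt
  · exact absurd h (add_psi_lt_add_psi AC1 AC3 hγ hδ hlt).ne
  · exact heq
  · exact absurd h (add_psi_lt_add_psi AC1 AC3 hδ hγ hgt).ne'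

theorem psi_lt_psi_sub_psi (AC3 : ∀ α β : Γ, 0 < α → β ≠ 0 → ψ β < α + ψ α)
    {a b : Γ} (hb : b ≠ 0) (hab : ψ a < ψ b) : ψ a < ψ (ψ b - ψ a) := by
  have h := AC3 (ψ b - ψ a) b (sub_pos.mpr hab) hb
  rw [← sub_lt_iff_lt_add'] at h
  simpa using h

theorem psi_add_psi_sub_add_psi
    (AC1 : ∀ α β : Γ, α ≠ 0 → β ≠ 0 → α + β ≠ 0 → min (ψ α) (ψ β) ≤ ψ (α + β))
    (AC2 : ∀ (α : Γ) (k : ℤ), α ≠ 0 → k ≠ 0 → ψ (k • α) = ψ α)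
    (AC3 : ∀ α β : Γ, 0 < α → β ≠ 0 → ψ β < α + ψ α)
    {a b : Γ} (ha : a ≠ 0) (hb : b ≠ 0) (hab : ψ a < ψ b) :
    ψ ((b + ψ b) - (a + ψ a)) = ψ a := by
  have hba : ψ (b - a) = ψ a := by
    rw [sub_eq_neg_add, psi_add_eq_left_of_lt AC1 AC2 (neg_ne_zero.mpr ha) hb
      (by rwa [psi_neg AC2 ha]), psi_neg AC2 ha]
  have hne : b - a ≠ 0 := fun h => hab.ne (by rw [sub_eq_zero.mp h])
  have hd := psi_lt_psi_sub_psi AC3 hb hab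
  have hd0 : ψ b - ψ a ≠ 0 := (sub_pos.mpr hab).ne'
  calc ψ ((b + ψ b) - (a + ψ a)) = ψ ((b - a) + (ψ b - ψ a)) := by abel_nf
    _ = ψ a := by rw [psi_add_eq_left_of_lt AC1 AC2 hne hd0 (hba ▸ hd), hba]

end AsymptoticCouple

theorem neg_of_add_psi_eq_psi {Γ : Type*} [AddGroup Γ] [LinearOrder Γ] {ψ : Γ → Γ}
    (AC3 : ∀ α β : Γ, 0 < α → β ≠ 0 → ψ β < α + ψ α)
    {γ a : Γ} (hγ : γ ≠ 0) (ha : a ≠ 0) (h : γ + ψ γ = ψ a) : γ < 0 := by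
  refine hγ.lt_or_gt.resolve_right fun hpos => ?_
  have := AC3 γ a hpos ha
  rw [h] at this
  exact this.false

theorem stmt_7_general {Γ : Type*} [AddCommGroup Γ] [LinearOrder Γ] [IsOrderedAddMonoid Γ] (ψ : Γ → Γ)
    (AC1 : ∀ α β : Γ, α ≠ 0 → β ≠ 0 → α + β ≠ 0 → min (ψ α) (ψ β) ≤ ψ (α + β))
    (AC2 : ∀ (α : Γ) (k : ℤ), α ≠ 0 → k ≠ 0 → ψ (k • α) = ψ α)
    (AC3 : ∀ α β : Γ, 0 < α → β ≠ 0 → ψ β < α + ψ α)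
    (int : Γ → Γ)
    (hint : ∀ α : Γ, int α ≠ 0 ∧ int α + ψ (int α) = α) :
    (∀ α : Γ, int α = α - ψ (int α)) ∧
    (∀ α β : Γ, ψ (int α) < ψ (int β) → ψ (β - α) = ψ (int α)) ∧
    (∀ α β : Γ, α ≠ β → (β = ψ (α - β) ↔ β = ψ (int α))) ∧
    (∀ α : Γ, ψ (int α) < ψ (int (ψ (int α)))) := by
  have int_eq : ∀ α, int α = α - ψ (int α) := fun α => eq_sub_of_add_eq (hint α).2
  refine ⟨int_eq, fun α β h => ?_, fun α β hne => ⟨fun hβ => ?_, fun hβ => ?_⟩, fun α => ?_⟩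
  · have := psi_add_psi_sub_add_psi AC1 AC2 AC3 (hint α).1 (hint β).1 h
    rwa [(hint α).2, (hint β).2] at this
  · have hsub : α - β = int α :=
      eq_of_add_psi_eq_add_psi AC1 AC3 (sub_ne_zero.mpr hne) (hint α).1
        (by rw [(hint α).2, ← hβ, sub_add_cancel])
    rw [hβ, hsub]
  · rw [hβ, ← int_eq]
  · obtain ⟨hγ, hγ_eq⟩ := hint (ψ (int α))
    have hneg := neg_of_add_psi_eq_psi AC3 hγ (hint α).1 hγ_eq
    calc ψ (int α) = int (ψ (int α)) + ψ (int (ψ (int α))) := hγ_eq.symm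
      _ < ψ (int (ψ (int α))) := add_lt_of_neg_left _ hneg

/-- Let `(Γ, ψ)` be an H-asymptotic couple with asymptotic integration,
with integration map `int` (`int α` is the unique nonzero `β` with `β + ψ β = α`) and
successor function `s α = ψ (int α)`. Then: (1) `∫α = α − s α`; (2) if `s α < s β` then
`ψ (β − α) = s α`; (3) for `α ≠ β`, `β = ψ (α − β)` iff `β = s α`; (4) `s α < s (s α)`. -/
theorem stmt_7 {Γ : Type*} [AddCommGroup Γ] [LinearOrder Γ] [IsOrderedAddMonoid Γ] (ψ : Γ → Γ)
    (AC1 : ∀ α β : Γ, α ≠ 0 → β ≠ 0 → α + β ≠ 0 → min (ψ α) (ψ β) ≤ ψ (α + β))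
    (AC2 : ∀ (α : Γ) (k : ℤ), α ≠ 0 → k ≠ 0 → ψ (k • α) = ψ α)
    (AC3 : ∀ α β : Γ, 0 < α → β ≠ 0 → ψ β < α + ψ α)
    (HC : ∀ α β : Γ, 0 < α → α ≤ β → ψ β ≤ ψ α)
    (int : Γ → Γ)
    (hint : ∀ α : Γ, int α ≠ 0 ∧ int α + ψ (int α) = α) :
    (∀ α : Γ, int α = α - ψ (int α)) ∧
    (∀ α β : Γ, ψ (int α) < ψ (int β) → ψ (β - α) = ψ (int α)) ∧
    (∀ α β : Γ, α ≠ β → (β = ψ (α - β) ↔ β = ψ (int α))) ∧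
    (∀ α : Γ, ψ (int α) < ψ (int (ψ (int α)))) :=
  stmt_7_general ψ AC1 AC2 AC3 int hint
end

section
/- Let (Γ, ψ) be an H-asymptotic couple with asymptotic integration and contraction map χ. Then: (1) for nonzero γ ∈ Γ, the archimedean class [χ(γ)] is strictly smaller than [γ]; (2) for α ≠ β in Γ, [χ(α) − χ(β)] < [α − β]; (3) if α < β in Γ then α − χ(α) < β − χ(β). -/
/-!
Since `ψ` is invariant under nonzero multiples and antitone on positive elements, `ψ α < ψ β`
forces `[β] < [α]`. For `b = ∫ ψ γ`, axiom (AC3) rules out `b > 0`, so `ψ γ = b + ψ b < ψ b`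
and hence `[χ γ] < [γ]`. In (2), if `ψ α < ψ β` then `[α - β] = [α]` exceeds both `[χ α]` and
`[χ β]`, while `ψ α = ψ β` gives `χ α = χ β`. Part (3) is (2) with `n = 1`.

Mathlib's `ArchimedeanClass.mk` is ordered the other way round: `mk a < mk b` means `[b] < [a]`.
-/

open ArchimedeanClass

section ArchimedeanClass

variable {Γ : Type*} [AddCommGroup Γ] [LinearOrder Γ] [IsOrderedAddMonoid Γ]

lemma ArchimedeanClass.mk_sub_lt_mk_sub {α β a b : Γ} (hαβ : mk α < mk β) (ha : mk α < mk a)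
    (hb : mk β < mk b) : mk (α - β) < mk (a - b) := by
  rw [mk_sub_eq_mk_left hαβ]
  exact (lt_min ha (hαβ.trans hb)).trans_le (min_le_mk_sub a b)

lemma sub_lt_sub_of_mk_sub_lt_mk_sub {α β a b : Γ} (hαβ : α < β)
    (hmk : mk (α - β) < mk (a - b)) : α - a < β - b := by
  rw [mk_sub_comm, mk_sub_comm a] at hmk
  have := lt_of_mk_lt_mk_of_nonneg hmk (sub_nonneg.mpr hαβ.le)
  rw [sub_lt_sub_iff] at this ⊢
  rwa [add_comm]

end ArchimedeanClass

section HAsymptoticCouple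

variable {Γ : Type*} [AddCommGroup Γ] {ψ : Γ → Γ}

lemma psi_nsmul (AC2 : ∀ (α : Γ) (k : ℤ), α ≠ 0 → k ≠ 0 → ψ (k • α) = ψ α)
    {x : Γ} (hx : x ≠ 0) {n : ℕ} (hn : n ≠ 0) : ψ (n • x) = ψ x := by
  simpa only [natCast_zsmul] using AC2 x n hx (Int.natCast_ne_zero.mpr hn)

variable [LinearOrder Γ]

lemma psi_abs (AC2 : ∀ (α : Γ) (k : ℤ), α ≠ 0 → k ≠ 0 → ψ (k • α) = ψ α)
    {x : Γ} (hx : x ≠ 0) : ψ |x| = ψ x := by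
  rcases abs_choice x with h | h
  · rw [h]
  · simpa [h] using AC2 x (-1) hx (by norm_num)

variable [IsOrderedAddMonoid Γ]

lemma mk_lt_mk_of_psi_lt (AC2 : ∀ (α : Γ) (k : ℤ), α ≠ 0 → k ≠ 0 → ψ (k • α) = ψ α)
    (HC : ∀ α β : Γ, 0 < α → α ≤ β → ψ β ≤ ψ α)
    {x y : Γ} (hx : x ≠ 0) (hy : y ≠ 0) (hψ : ψ x < ψ y) : mk x < mk y := by
  refine mk_lt_mk.mpr fun n => lt_of_not_ge fun hle => hψ.not_ge ?_
  have hn : n ≠ 0 := by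
    rintro rfl
    exact hx (abs_nonpos_iff.mp (by simpa using hle))
  have := HC |x| (n • |y|) (abs_pos.mpr hx) hle
  rwa [psi_nsmul AC2 (abs_ne_zero.mpr hy) hn, psi_abs AC2 hy, psi_abs AC2 hx] at this

lemma psi_lt_psi_int_psi (AC3 : ∀ α β : Γ, 0 < α → β ≠ 0 → ψ β < α + ψ α)
    {int : Γ → Γ} (hint : ∀ α : Γ, int α ≠ 0 ∧ int α + ψ (int α) = α)
    {γ : Γ} (hγ : γ ≠ 0) : ψ γ < ψ (int (ψ γ)) := by
  obtain ⟨hb, hbψ⟩ := hint (ψ γ)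
  have hneg : int (ψ γ) < 0 :=
    hb.lt_or_gt.resolve_right fun hpos => (AC3 _ γ hpos hγ).ne hbψ.symm
  calc ψ γ = int (ψ γ) + ψ (int (ψ γ)) := hbψ.symm
    _ < ψ (int (ψ γ)) := add_lt_of_neg_left _ hneg

lemma mk_lt_mk_contraction (AC2 : ∀ (α : Γ) (k : ℤ), α ≠ 0 → k ≠ 0 → ψ (k • α) = ψ α)
    (AC3 : ∀ α β : Γ, 0 < α → β ≠ 0 → ψ β < α + ψ α)
    (HC : ∀ α β : Γ, 0 < α → α ≤ β → ψ β ≤ ψ α)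
    {int : Γ → Γ} (hint : ∀ α : Γ, int α ≠ 0 ∧ int α + ψ (int α) = α)
    {χ : Γ → Γ} (hχ : ∀ γ : Γ, γ ≠ 0 → χ γ = int (ψ γ))
    {γ : Γ} (hγ : γ ≠ 0) : mk γ < mk (χ γ) := by
  rw [hχ γ hγ]
  exact mk_lt_mk_of_psi_lt AC2 HC hγ (hint _).1 (psi_lt_psi_int_psi AC3 hint hγ)

lemma mk_sub_lt_mk_sub_contraction (AC2 : ∀ (α : Γ) (k : ℤ), α ≠ 0 → k ≠ 0 → ψ (k • α) = ψ α)
    (AC3 : ∀ α β : Γ, 0 < α → β ≠ 0 → ψ β < α + ψ α)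
    (HC : ∀ α β : Γ, 0 < α → α ≤ β → ψ β ≤ ψ α)
    {int : Γ → Γ} (hint : ∀ α : Γ, int α ≠ 0 ∧ int α + ψ (int α) = α)
    {χ : Γ → Γ} (hχ : ∀ γ : Γ, γ ≠ 0 → χ γ = int (ψ γ))
    (hχ0 : χ 0 = 0) {α β : Γ} (hαβ : α ≠ β) :
    mk (α - β) < mk (χ α - χ β) := by
  have of_psi_lt : ∀ {α β : Γ}, α ≠ 0 → β ≠ 0 → ψ α < ψ β → mk (α - β) < mk (χ α - χ β) :=
    fun hα hβ hψ => mk_sub_lt_mk_sub (mk_lt_mk_of_psi_lt AC2 HC hα hβ hψ)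
      (mk_lt_mk_contraction AC2 AC3 HC hint hχ hα) (mk_lt_mk_contraction AC2 AC3 HC hint hχ hβ)
  obtain rfl | hα := eq_or_ne α 0
  · simpa [hχ0, mk_neg] using mk_lt_mk_contraction AC2 AC3 HC hint hχ hαβ.symm
  obtain rfl | hβ := eq_or_ne β 0
  · simpa [hχ0] using mk_lt_mk_contraction AC2 AC3 HC hint hχ hα
  rcases lt_trichotomy (ψ α) (ψ β) with hψ | hψ | hψ
  · exact of_psi_lt hα hβ hψ
  · rw [hχ α hα, hχ β hβ, hψ, sub_self, mk_zero, lt_top_iff_ne_top, Ne, mk_eq_top_iff]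
    exact sub_ne_zero.mpr hαβ
  · rw [mk_sub_comm, mk_sub_comm (χ α)]
    exact of_psi_lt hβ hα hψ

end HAsymptoticCouple

theorem stmt_8_general {Γ : Type*} [AddCommGroup Γ] [LinearOrder Γ] [IsOrderedAddMonoid Γ] (ψ : Γ → Γ)
    (AC2 : ∀ (α : Γ) (k : ℤ), α ≠ 0 → k ≠ 0 → ψ (k • α) = ψ α)
    (AC3 : ∀ α β : Γ, 0 < α → β ≠ 0 → ψ β < α + ψ α)
    (HC : ∀ α β : Γ, 0 < α → α ≤ β → ψ β ≤ ψ α)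
    (int : Γ → Γ)
    (hint : ∀ α : Γ, int α ≠ 0 ∧ int α + ψ (int α) = α)
    (χ : Γ → Γ) (hχ0 : χ 0 = 0) (hχ : ∀ γ : Γ, γ ≠ 0 → χ γ = int (ψ γ)) :
    (∀ γ : Γ, γ ≠ 0 → ∀ n : ℕ, 1 ≤ n → n • |χ γ| < |γ|) ∧
    (∀ α β : Γ, α ≠ β → ∀ n : ℕ, 1 ≤ n → n • |χ α - χ β| < |α - β|) ∧
    (∀ α β : Γ, α < β → α - χ α < β - χ β) :=
  have part2 {α β : Γ} (hαβ : α ≠ β) : mk (α - β) < mk (χ α - χ β) :=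
    mk_sub_lt_mk_sub_contraction AC2 AC3 HC hint hχ hχ0 hαβ
  ⟨fun _ hγ n _ => mk_lt_mk.mp (mk_lt_mk_contraction AC2 AC3 HC hint hχ hγ) n,
    fun _ _ hαβ n _ => mk_lt_mk.mp (part2 hαβ) n,
    fun _ _ hαβ => sub_lt_sub_of_mk_sub_lt_mk_sub hαβ (part2 hαβ.ne)⟩

/-- Let `(Γ, ψ)` be an H-asymptotic couple with asymptotic integration and
contraction map `χ` (`χ 0 = 0`, `χ γ = int (ψ γ)` for `γ ≠ 0`). Then:
(1) for nonzero `γ`, `[χ γ] < [γ]`, i.e. `n|χ γ| < |γ|` for all `n ≥ 1`;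
(2) for `α ≠ β`, `[χ α − χ β] < [α − β]`;
(3) if `α < β` then `α − χ α < β − χ β`. -/
theorem stmt_8 {Γ : Type*} [AddCommGroup Γ] [LinearOrder Γ] [IsOrderedAddMonoid Γ] (ψ : Γ → Γ)
    (AC1 : ∀ α β : Γ, α ≠ 0 → β ≠ 0 → α + β ≠ 0 → min (ψ α) (ψ β) ≤ ψ (α + β))
    (AC2 : ∀ (α : Γ) (k : ℤ), α ≠ 0 → k ≠ 0 → ψ (k • α) = ψ α)
    (AC3 : ∀ α β : Γ, 0 < α → β ≠ 0 → ψ β < α + ψ α)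
    (HC : ∀ α β : Γ, 0 < α → α ≤ β → ψ β ≤ ψ α)
    (int : Γ → Γ)
    (hint : ∀ α : Γ, int α ≠ 0 ∧ int α + ψ (int α) = α)
    (χ : Γ → Γ) (hχ0 : χ 0 = 0) (hχ : ∀ γ : Γ, γ ≠ 0 → χ γ = int (ψ γ)) :
    (∀ γ : Γ, γ ≠ 0 → ∀ n : ℕ, 1 ≤ n → n • |χ γ| < |γ|) ∧
    (∀ α β : Γ, α ≠ β → ∀ n : ℕ, 1 ≤ n → n • |χ α - χ β| < |α - β|) ∧
    (∀ α β : Γ, α < β → α - χ α < β - χ β) :=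
  stmt_8_general ψ AC2 AC3 HC int hint χ hχ0 hχ
end

section
/- Let (Γ, ψ) be an H-asymptotic couple with asymptotic integration, with successor function s. If α ∈ (Γ^{<0})′ and n ≥ 1, then α + (n+1)(s(α) − α) ∈ (Γ^{>0})′. -/
/-!
An element of `(Γ^{<0})′` is `α = γ + ψ γ` with `γ < 0`. Since `γ ↦ γ′` is strictly increasing on
`Γ^{<0}` and every `γ′` with `γ < 0` lies below every `β′` with `β > 0`, the element `γ` is the only
preimage of `α`, so `∫α = γ` and `s(α) - α = -γ`. Then
`α + (n+1)(s(α) - α) = ψ γ + n(-γ) = δ + ψ δ` for `δ = n(-γ) > 0`, because `ψ(nγ) = ψ γ`.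
-/

namespace AsymptoticCouple

theorem psi_neg {Γ : Type*} [AddGroup Γ] {ψ : Γ → Γ}
    (AC2 : ∀ (α : Γ) (k : ℤ), α ≠ 0 → k ≠ 0 → ψ (k • α) = ψ α) {a : Γ} (ha : a ≠ 0) :
    ψ (-a) = ψ a := by
  simpa using AC2 a (-1) ha (by norm_num)

theorem psi_nsmul {Γ : Type*} [AddGroup Γ] {ψ : Γ → Γ}
    (AC2 : ∀ (α : Γ) (k : ℤ), α ≠ 0 → k ≠ 0 → ψ (k • α) = ψ α) {a : Γ} (ha : a ≠ 0) {n : ℕ}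
    (hn : n ≠ 0) : ψ (n • a) = ψ a := by
  simpa using AC2 a n ha (by exact_mod_cast hn)

variable {Γ : Type*} [AddCommGroup Γ] [LinearOrder Γ] [IsOrderedAddMonoid Γ] {ψ : Γ → Γ}

theorem strictMonoOn_add_psi_neg (AC2 : ∀ (α : Γ) (k : ℤ), α ≠ 0 → k ≠ 0 → ψ (k • α) = ψ α)
    (HC : ∀ α β : Γ, 0 < α → α ≤ β → ψ β ≤ ψ α) :
    StrictMonoOn (fun γ ↦ γ + ψ γ) (Set.Iio 0) := by
  intro γ hγ γ' hγ' hlt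
  have hψ : ψ γ ≤ ψ γ' := by
    simpa only [psi_neg AC2 hγ.ne, psi_neg AC2 hγ'.ne] using
      HC (-γ') (-γ) (neg_pos.mpr hγ') (neg_le_neg hlt.le)
  exact add_lt_add_of_lt_of_le hlt hψ

theorem add_psi_lt_of_neg_of_pos (AC3 : ∀ α β : Γ, 0 < α → β ≠ 0 → ψ β < α + ψ α)
    {γ β : Γ} (hγ : γ < 0) (hβ : 0 < β) : γ + ψ γ < β + ψ β :=
  (add_lt_of_neg_left _ hγ).trans (AC3 β γ hβ hγ.ne)

theorem eq_of_add_psi_eq (AC2 : ∀ (α : Γ) (k : ℤ), α ≠ 0 → k ≠ 0 → ψ (k • α) = ψ α)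
    (AC3 : ∀ α β : Γ, 0 < α → β ≠ 0 → ψ β < α + ψ α)
    (HC : ∀ α β : Γ, 0 < α → α ≤ β → ψ β ≤ ψ α)
    {β γ : Γ} (hβ : β ≠ 0) (hγ : γ < 0) (h : β + ψ β = γ + ψ γ) : β = γ := by
  rcases hβ.lt_or_gt with hβ | hβ
  · exact (strictMonoOn_add_psi_neg AC2 HC).injOn hβ hγ h
  · exact absurd h (add_psi_lt_of_neg_of_pos AC3 hγ hβ).ne'

end AsymptoticCouple

theorem stmt_9_general {Γ : Type*} [AddCommGroup Γ] [LinearOrder Γ] [IsOrderedAddMonoid Γ] (ψ : Γ → Γ)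
    (AC2 : ∀ (α : Γ) (k : ℤ), α ≠ 0 → k ≠ 0 → ψ (k • α) = ψ α)
    (AC3 : ∀ α β : Γ, 0 < α → β ≠ 0 → ψ β < α + ψ α)
    (HC : ∀ α β : Γ, 0 < α → α ≤ β → ψ β ≤ ψ α)
    (int : Γ → Γ)
    (hint : ∀ α : Γ, int α ≠ 0 ∧ int α + ψ (int α) = α)
    (α : Γ) (hα : ∃ γ : Γ, γ < 0 ∧ γ + ψ γ = α) (n : ℕ) (hn : 1 ≤ n) :
    ∃ δ : Γ, 0 < δ ∧ δ + ψ δ = α + (n + 1) • (ψ (int α) - α) := by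
  obtain ⟨γ, hγ, rfl⟩ := hα
  have hint_eq : int (γ + ψ γ) = γ :=
    AsymptoticCouple.eq_of_add_psi_eq AC2 AC3 HC (hint _).1 hγ (hint _).2
  have hψδ : ψ (n • -γ) = ψ γ := by
    rw [AsymptoticCouple.psi_nsmul AC2 (neg_ne_zero.mpr hγ.ne) (by omega),
      AsymptoticCouple.psi_neg AC2 hγ.ne]
  refine ⟨n • -γ, nsmul_pos (neg_pos.mpr hγ) (by omega), ?_⟩
  rw [hψδ, hint_eq, sub_add_cancel_right, succ_nsmul]
  abel

/-- Let `(Γ, ψ)` be an H-asymptotic couple with asymptotic integration and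
successor function `s α = ψ (int α)`. If `α ∈ (Γ^{<0})'` and `n ≥ 1`, then
`α + (n+1)(s α − α) ∈ (Γ^{>0})'`. -/
theorem stmt_9 {Γ : Type*} [AddCommGroup Γ] [LinearOrder Γ] [IsOrderedAddMonoid Γ] (ψ : Γ → Γ)
    (AC1 : ∀ α β : Γ, α ≠ 0 → β ≠ 0 → α + β ≠ 0 → min (ψ α) (ψ β) ≤ ψ (α + β))
    (AC2 : ∀ (α : Γ) (k : ℤ), α ≠ 0 → k ≠ 0 → ψ (k • α) = ψ α)
    (AC3 : ∀ α β : Γ, 0 < α → β ≠ 0 → ψ β < α + ψ α)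
    (HC : ∀ α β : Γ, 0 < α → α ≤ β → ψ β ≤ ψ α)
    (int : Γ → Γ)
    (hint : ∀ α : Γ, int α ≠ 0 ∧ int α + ψ (int α) = α)
    (α : Γ) (hα : ∃ γ : Γ, γ < 0 ∧ γ + ψ γ = α) (n : ℕ) (hn : 1 ≤ n) :
    ∃ δ : Γ, 0 < δ ∧ δ + ψ δ = α + (n + 1) • (ψ (int α) - α) :=
  stmt_9_general ψ AC2 AC3 HC int hint α hα n hn
end

section
/- Let (Γ, ψ) be an H-asymptotic couple with asymptotic integration. Then the set Ψ = ψ(Γ∖{0}) and its downward closure Ψ↓ = (Γ^{<0})′ are jammed subsets of Γ. -/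
section OrderedGroup

variable {Γ : Type*} [AddCommGroup Γ] [LinearOrder Γ] [IsOrderedAddMonoid Γ]

theorem AddSubgroup.exists_pos_mem_of_ne_bot {Δ : AddSubgroup Γ} (hΔ : Δ ≠ ⊥) :
    ∃ δ ∈ Δ, 0 < δ := by
  obtain ⟨a, haΔ, ha⟩ := (AddSubgroup.bot_or_exists_ne_zero Δ).resolve_left hΔ
  rcases ha.lt_or_gt with ha | ha
  · exact ⟨-a, neg_mem haΔ, neg_pos.2 ha⟩
  · exact ⟨a, haΔ, ha⟩

theorem isJammed_of_forall_pos {S : Set Γ} (hne : S.Nonempty) (hmax : ∀ s ∈ S, ∃ t ∈ S, s < t)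
    (hgap : ∀ δ, 0 < δ → ∃ s ∈ S, ∀ t ∈ S, t < δ + s) : IsJammed S := by
  refine ⟨hne, fun ⟨m, hm, hle⟩ => ?_, fun Δ hconv hΔ => ?_⟩
  · obtain ⟨t, ht, hmt⟩ := hmax m hm
    exact (hle t ht).not_gt hmt
  · obtain ⟨δ, hδΔ, hδ⟩ := AddSubgroup.exists_pos_mem_of_ne_bot hΔ
    obtain ⟨s, hs, hsδ⟩ := hgap δ hδ
    exact ⟨s, hs, fun t ht hst =>
      hconv 0 Δ.zero_mem δ hδΔ _ (sub_nonneg.2 hst.le) (sub_le_iff_le_add.2 (hsδ t ht).le)⟩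

theorem IsJammed.of_subset_of_cofinal {S T : Set Γ} (hS : IsJammed S) (hST : S ⊆ T)
    (hcof : ∀ t ∈ T, ∃ s ∈ S, t < s) : IsJammed T := by
  obtain ⟨hne, -, hjam⟩ := hS
  refine ⟨hne.mono hST, fun ⟨m, hm, hle⟩ => ?_, fun Δ hconv hΔ => ?_⟩
  · obtain ⟨s, hs, hms⟩ := hcof m hm
    exact (hle s (hST hs)).not_gt hms
  · obtain ⟨s₀, hs₀, hs₀Δ⟩ := hjam Δ hconv hΔ
    refine ⟨s₀, hST hs₀, fun t ht hs₀t => ?_⟩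
    obtain ⟨s, hs, hts⟩ := hcof t ht
    exact hconv 0 Δ.zero_mem _ (hs₀Δ s hs (hs₀t.trans hts)) _ (sub_nonneg.2 hs₀t.le)
      (sub_le_sub_right hts.le _)

end OrderedGroup

section AsymptoticCouple

variable {Γ : Type*} [AddCommGroup Γ] [LinearOrder Γ] [IsOrderedAddMonoid Γ] {ψ : Γ → Γ}
  (AC3 : ∀ α β : Γ, 0 < α → β ≠ 0 → ψ β < α + ψ α)
  (hai : ∀ β : Γ, ∃ γ : Γ, γ ≠ 0 ∧ γ + ψ γ = β)

omit [IsOrderedAddMonoid Γ] in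
include AC3 hai in
theorem exists_neg_add_psi_eq_psi {γ : Γ} (hγ : γ ≠ 0) : ∃ δ < 0, δ + ψ δ = ψ γ := by
  obtain ⟨δ, hδ, h⟩ := hai (ψ γ)
  refine ⟨δ, hδ.lt_or_gt.resolve_right fun hδ => ?_, h⟩
  exact (h ▸ AC3 δ γ hδ hγ).false

include AC3 hai in
theorem isJammed_psi_image : IsJammed {β : Γ | ∃ γ : Γ, γ ≠ 0 ∧ ψ γ = β} := by
  refine isJammed_of_forall_pos ?_ ?_ ?_
  · obtain ⟨γ, hγ, -⟩ := hai 0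
    exact ⟨ψ γ, γ, hγ, rfl⟩
  · rintro _ ⟨γ, hγ, rfl⟩
    obtain ⟨δ, hδ, h⟩ := exists_neg_add_psi_eq_psi AC3 hai hγ
    exact ⟨ψ δ, ⟨δ, hδ.ne, rfl⟩, h ▸ add_lt_of_neg_left _ hδ⟩
  · intro δ hδ
    refine ⟨ψ δ, ⟨δ, hδ.ne', rfl⟩, ?_⟩
    rintro _ ⟨ε, hε, rfl⟩
    exact AC3 δ ε hδ hε

include AC3 hai in
theorem isJammed_add_psi_image_neg : IsJammed {β : Γ | ∃ γ : Γ, γ < 0 ∧ γ + ψ γ = β} := by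
  refine (isJammed_psi_image AC3 hai).of_subset_of_cofinal ?_ ?_
  · rintro _ ⟨γ, hγ, rfl⟩
    exact exists_neg_add_psi_eq_psi AC3 hai hγ
  · rintro _ ⟨ε, hε, rfl⟩
    exact ⟨ψ ε, ⟨ε, hε.ne, rfl⟩, add_lt_of_neg_left _ hε⟩

end AsymptoticCouple

theorem stmt_10_general {Γ : Type*} [AddCommGroup Γ] [LinearOrder Γ] [IsOrderedAddMonoid Γ] (ψ : Γ → Γ)
    (AC3 : ∀ α β : Γ, 0 < α → β ≠ 0 → ψ β < α + ψ α)
    (hai : ∀ β : Γ, ∃ γ : Γ, γ ≠ 0 ∧ γ + ψ γ = β) :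
    IsJammed {β : Γ | ∃ γ : Γ, γ ≠ 0 ∧ ψ γ = β} ∧
    IsJammed {β : Γ | ∃ γ : Γ, γ < 0 ∧ γ + ψ γ = β} :=
  ⟨isJammed_psi_image AC3 hai, isJammed_add_psi_image_neg AC3 hai⟩

/-- Let `(Γ, ψ)` be an H-asymptotic couple with asymptotic integration.
Then `Ψ = ψ(Γ∖{0})` and its downward closure `Ψ↓ = (Γ^{<0})'` are jammed subsets of Γ. -/
theorem stmt_10 {Γ : Type*} [AddCommGroup Γ] [LinearOrder Γ] [IsOrderedAddMonoid Γ] (ψ : Γ → Γ)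
    (AC1 : ∀ α β : Γ, α ≠ 0 → β ≠ 0 → α + β ≠ 0 → min (ψ α) (ψ β) ≤ ψ (α + β))
    (AC2 : ∀ (α : Γ) (k : ℤ), α ≠ 0 → k ≠ 0 → ψ (k • α) = ψ α)
    (AC3 : ∀ α β : Γ, 0 < α → β ≠ 0 → ψ β < α + ψ α)
    (HC : ∀ α β : Γ, 0 < α → α ≤ β → ψ β ≤ ψ α)
    (hai : ∀ β : Γ, ∃ γ : Γ, γ ≠ 0 ∧ γ + ψ γ = β) :
    IsJammed {β : Γ | ∃ γ : Γ, γ ≠ 0 ∧ ψ γ = β} ∧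
    IsJammed {β : Γ | ∃ γ : Γ, γ < 0 ∧ γ + ψ γ = β} :=
  stmt_10_general ψ AC3 hai
end

section
/- Let (Γ, ψ) be an H-asymptotic couple with asymptotic integration, and let S ⊆ Γ be a nonempty convex subset without a greatest element having the yardstick property. Then for every γ ∈ S, γ − χ(γ) ∈ S. -/
/-!
The map `γ ↦ γ - χ γ` is strictly increasing: for `a < b` with `ψ a < ψ b` the
asymptotic couple axioms force `ψ (b - a) ≤ ψ a`, and then `-χ a < b - a`; otherwise `χ b ≤ χ a`
because `∫` is monotone. Given `γ ∈ S`, pick `γ' ∈ S` above both `γ` and the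
yardstick `β`; then `γ' - χ γ' ∈ S`, and since `χ ≤ 0` we get
`γ ≤ γ - χ γ < γ' - χ γ'`, so `γ - χ γ ∈ S` by convexity.
-/

theorem chi_add_psi_chi {Γ : Type*} [AddCommGroup Γ] {ψ int χ : Γ → Γ}
    (hint : ∀ α : Γ, int α ≠ 0 ∧ int α + ψ (int α) = α)
    (hχ : ∀ γ : Γ, γ ≠ 0 → χ γ = int (ψ γ)) {γ : Γ} (hγ : γ ≠ 0) :
    χ γ + ψ (χ γ) = ψ γ := by
  rw [hχ γ hγ]
  exact (hint _).2

structure IsAsymptoticCouple {Γ : Type*} [AddCommGroup Γ] [LinearOrder Γ] (ψ : Γ → Γ) : Prop where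
  min_le_psi_add : ∀ α β : Γ, α ≠ 0 → β ≠ 0 → α + β ≠ 0 → min (ψ α) (ψ β) ≤ ψ (α + β)
  psi_zsmul : ∀ (α : Γ) (k : ℤ), α ≠ 0 → k ≠ 0 → ψ (k • α) = ψ α
  psi_lt_add_psi : ∀ α β : Γ, 0 < α → β ≠ 0 → ψ β < α + ψ α

namespace IsAsymptoticCouple

variable {Γ : Type*} [AddCommGroup Γ] [LinearOrder Γ] {ψ int χ : Γ → Γ}

theorem psi_neg (h : IsAsymptoticCouple ψ) (α : Γ) : ψ (-α) = ψ α := by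
  rcases eq_or_ne α 0 with rfl | hα
  · rw [neg_zero]
  · simpa using h.psi_zsmul α (-1) hα (by decide)

theorem int_psi_neg (h : IsAsymptoticCouple ψ)
    (hint : ∀ α : Γ, int α ≠ 0 ∧ int α + ψ (int α) = α) {γ : Γ} (hγ : γ ≠ 0) :
    int (ψ γ) < 0 := by
  refine lt_of_le_of_ne (not_lt.mp fun hpos => ?_) (hint _).1
  have := h.psi_lt_add_psi _ γ hpos hγ
  rw [(hint _).2] at this
  exact this.false

theorem chi_neg (h : IsAsymptoticCouple ψ)
    (hint : ∀ α : Γ, int α ≠ 0 ∧ int α + ψ (int α) = α)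
    (hχ : ∀ γ : Γ, γ ≠ 0 → χ γ = int (ψ γ)) {γ : Γ} (hγ : γ ≠ 0) : χ γ < 0 := by
  rw [hχ γ hγ]
  exact h.int_psi_neg hint hγ

theorem chi_nonpos (h : IsAsymptoticCouple ψ)
    (hint : ∀ α : Γ, int α ≠ 0 ∧ int α + ψ (int α) = α) (hχ0 : χ 0 = 0)
    (hχ : ∀ γ : Γ, γ ≠ 0 → χ γ = int (ψ γ)) (γ : Γ) : χ γ ≤ 0 := by
  rcases eq_or_ne γ 0 with rfl | hγ
  · exact hχ0.le
  · exact (h.chi_neg hint hχ hγ).le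

theorem psi_sub_le_of_psi_lt (h : IsAsymptoticCouple ψ) {a b : Γ} (ha : a ≠ 0) (hb : b ≠ 0)
    (hab : a ≠ b) (hψ : ψ a < ψ b) : ψ (b - a) ≤ ψ a := by
  have hmin : min (ψ b) (ψ (a - b)) ≤ ψ a := by
    simpa using h.min_le_psi_add b (a - b) hb (sub_ne_zero.mpr hab) (by simpa using ha)
  rw [← neg_sub, h.psi_neg]
  rcases min_choice (ψ b) (ψ (a - b)) with hc | hc <;> rw [hc] at hmin
  · exact absurd hψ hmin.not_gt
  · exact hmin

variable [IsOrderedAddMonoid Γ]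

theorem add_psi_lt_add_psi (h : IsAsymptoticCouple ψ) {x y : Γ} (hx : x ≠ 0) (hy : y ≠ 0)
    (hxy : x < y) : x + ψ x < y + ψ y := by
  have hd : 0 < y - x := sub_pos.mpr hxy
  have hmin : min (ψ x) (ψ (y - x)) ≤ ψ y := by
    simpa using h.min_le_psi_add x (y - x) hx hd.ne' (by simpa using hy)
  rcases min_choice (ψ x) (ψ (y - x)) with hc | hc <;> rw [hc] at hmin
  · exact add_lt_add_of_lt_of_le hxy hmin
  · calc x + ψ x < x + ((y - x) + ψ (y - x)) := by gcongr; exact h.psi_lt_add_psi _ x hd hx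
      _ = y + ψ (y - x) := by abel
      _ ≤ y + ψ y := by gcongr

theorem add_psi_le_add_psi (h : IsAsymptoticCouple ψ) {x y : Γ} (hx : x ≠ 0) (hy : y ≠ 0)
    (hxy : x ≤ y) : x + ψ x ≤ y + ψ y := by
  rcases hxy.eq_or_lt with rfl | hlt
  · rfl
  · exact (h.add_psi_lt_add_psi hx hy hlt).le

theorem int_monotone (h : IsAsymptoticCouple ψ)
    (hint : ∀ α : Γ, int α ≠ 0 ∧ int α + ψ (int α) = α) : Monotone int := by
  intro a b hab
  by_contra! hlt
  have := h.add_psi_lt_add_psi (hint b).1 (hint a).1 hlt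
  rw [(hint a).2, (hint b).2] at this
  exact hab.not_gt this

theorem lt_chi_of_neg (h : IsAsymptoticCouple ψ)
    (hint : ∀ α : Γ, int α ≠ 0 ∧ int α + ψ (int α) = α)
    (hχ : ∀ γ : Γ, γ ≠ 0 → χ γ = int (ψ γ)) {a : Γ} (ha : a < 0) : a < χ a := by
  by_contra! hle
  have := h.add_psi_le_add_psi (h.chi_neg hint hχ ha.ne).ne ha.ne hle
  rw [chi_add_psi_chi hint hχ ha.ne, le_add_iff_nonneg_left] at this
  exact this.not_gt ha

theorem sub_chi_lt_sub_chi_of_ne_zero (h : IsAsymptoticCouple ψ)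
    (hint : ∀ α : Γ, int α ≠ 0 ∧ int α + ψ (int α) = α)
    (hχ : ∀ γ : Γ, γ ≠ 0 → χ γ = int (ψ γ)) {a b : Γ} (ha : a ≠ 0) (hb : b ≠ 0)
    (hab : a < b) : a - χ a < b - χ b := by
  rcases le_or_gt (ψ b) (ψ a) with hψ | hψ
  · have hχab : χ b ≤ χ a := by
      rw [hχ a ha, hχ b hb]
      exact h.int_monotone hint hψ
    calc a - χ a < b - χ a := by gcongr
      _ ≤ b - χ b := by gcongr
  · have hd : 0 < b - a := sub_pos.mpr hab
    have hlt : ψ (χ a) < (b - a) + χ a + ψ (χ a) :=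
      calc ψ (χ a) < (b - a) + ψ (b - a) :=
            h.psi_lt_add_psi _ _ hd (h.chi_neg hint hχ ha).ne
        _ ≤ (b - a) + ψ a := by gcongr; exact h.psi_sub_le_of_psi_lt ha hb hab.ne hψ
        _ = (b - a) + χ a + ψ (χ a) := by rw [add_assoc, chi_add_psi_chi hint hχ ha]
    calc a - χ a < a - χ a + ((b - a) + χ a) :=
          lt_add_of_pos_right _ ((lt_add_iff_pos_left _).mp hlt)
      _ = b := by abel
      _ ≤ b - χ b := (le_sub_self_iff b).mpr (h.chi_neg hint hχ hb).le

theorem strictMono_sub_chi (h : IsAsymptoticCouple ψ)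
    (hint : ∀ α : Γ, int α ≠ 0 ∧ int α + ψ (int α) = α) (hχ0 : χ 0 = 0)
    (hχ : ∀ γ : Γ, γ ≠ 0 → χ γ = int (ψ γ)) : StrictMono fun γ => γ - χ γ := by
  intro a b hab
  rcases eq_or_ne a 0 with rfl | ha
  · simpa [hχ0] using (h.chi_neg hint hχ hab.ne').trans hab
  rcases eq_or_ne b 0 with rfl | hb
  · simpa [hχ0] using h.lt_chi_of_neg hint hχ hab
  exact h.sub_chi_lt_sub_chi_of_ne_zero hint hχ ha hb hab

end IsAsymptoticCouple

theorem stmt_13_general {Γ : Type*} [AddCommGroup Γ] [LinearOrder Γ] [IsOrderedAddMonoid Γ] (ψ : Γ → Γ)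
    (AC1 : ∀ α β : Γ, α ≠ 0 → β ≠ 0 → α + β ≠ 0 → min (ψ α) (ψ β) ≤ ψ (α + β))
    (AC2 : ∀ (α : Γ) (k : ℤ), α ≠ 0 → k ≠ 0 → ψ (k • α) = ψ α)
    (AC3 : ∀ α β : Γ, 0 < α → β ≠ 0 → ψ β < α + ψ α)
    (int : Γ → Γ)
    (hint : ∀ α : Γ, int α ≠ 0 ∧ int α + ψ (int α) = α)
    (χ : Γ → Γ) (hχ0 : χ 0 = 0) (hχ : ∀ γ : Γ, γ ≠ 0 → χ γ = int (ψ γ))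
    (S : Set Γ)
    (hconv : ∀ a ∈ S, ∀ b ∈ S, ∀ c : Γ, a ≤ c → c ≤ b → c ∈ S)
    (hnomax : ¬ ∃ m ∈ S, ∀ x ∈ S, x ≤ m)
    (hyard : ∃ β ∈ S, ∀ γ ∈ S, β < γ → γ - χ γ ∈ S) :
    ∀ γ ∈ S, γ - χ γ ∈ S := by
  have h : IsAsymptoticCouple ψ := ⟨AC1, AC2, AC3⟩
  intro γ hγ
  obtain ⟨β, hβ, hyard⟩ := hyard
  obtain ⟨γ', hγ', hlt⟩ : ∃ γ' ∈ S, max β γ < γ' := by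
    push Not at hnomax
    exact hnomax _ (max_rec' (· ∈ S) hβ hγ)
  have hγ'_yard : γ' - χ γ' ∈ S := hyard γ' hγ' (le_max_left β γ |>.trans_lt hlt)
  refine hconv γ hγ _ hγ'_yard _ ?_ ?_
  · simpa using h.chi_nonpos hint hχ0 hχ γ
  · exact (h.strictMono_sub_chi hint hχ0 hχ (le_max_right β γ |>.trans_lt hlt)).le

/-- Let `(Γ, ψ)` be an H-asymptotic couple with asymptotic integration and
contraction map `χ`, and let `S ⊆ Γ` be nonempty, convex, without a greatest element,
having the yardstick property. Then for every `γ ∈ S`, `γ − χ γ ∈ S`. -/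
theorem stmt_13 {Γ : Type*} [AddCommGroup Γ] [LinearOrder Γ] [IsOrderedAddMonoid Γ] (ψ : Γ → Γ)
    (AC1 : ∀ α β : Γ, α ≠ 0 → β ≠ 0 → α + β ≠ 0 → min (ψ α) (ψ β) ≤ ψ (α + β))
    (AC2 : ∀ (α : Γ) (k : ℤ), α ≠ 0 → k ≠ 0 → ψ (k • α) = ψ α)
    (AC3 : ∀ α β : Γ, 0 < α → β ≠ 0 → ψ β < α + ψ α)
    (HC : ∀ α β : Γ, 0 < α → α ≤ β → ψ β ≤ ψ α)
    (int : Γ → Γ)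
    (hint : ∀ α : Γ, int α ≠ 0 ∧ int α + ψ (int α) = α)
    (χ : Γ → Γ) (hχ0 : χ 0 = 0) (hχ : ∀ γ : Γ, γ ≠ 0 → χ γ = int (ψ γ))
    (S : Set Γ) (hS : S.Nonempty)
    (hconv : ∀ a ∈ S, ∀ b ∈ S, ∀ c : Γ, a ≤ c → c ≤ b → c ∈ S)
    (hnomax : ¬ ∃ m ∈ S, ∀ x ∈ S, x ≤ m)
    (hyard : ∃ β ∈ S, ∀ γ ∈ S, β < γ → γ - χ γ ∈ S) :
    ∀ γ ∈ S, γ - χ γ ∈ S :=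
  stmt_13_general ψ AC1 AC2 AC3 int hint χ hχ0 hχ S hconv hnomax hyard
end

section
/- Let (Γ, ψ) be an H-asymptotic couple with asymptotic integration and S ⊆ Γ a nonempty convex set without a greatest element, with either S ⊆ (Γ^{>0})′ or S ⊆ (Γ^{<0})′, having the derived yardstick property. Then ∫S := {∫s : s ∈ S} is nonempty, convex, has no greatest element, and has the yardstick property. -/
/-!
On nonzero elements the derivative `γ ↦ γ + ψ γ` is strictly increasing, so `∫` is an order
isomorphism from `Γ` onto the nonzero elements; this carries convexity and the absence of a
greatest element from `S` to `∫S`, the sign condition on `S` keeping `0` out of `∫S`. For the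
yardstick property, `∫ψ γ` is negative with `ψ γ < ψ (∫ψ γ)`, so
`ψ (γ - ∫ψ γ) = ψ γ` and hence `∫(γ′ - ∫ψ γ) = γ - ∫ψ γ = γ - χ γ`: the derived yardstick
step on `γ′ ∈ S` is the yardstick step on `γ ∈ ∫S`.
-/

open Set

section

variable {Γ : Type*} [AddCommGroup Γ] [LinearOrder Γ]

structure IsAsymptoticCouple_s15 (ψ : Γ → Γ) : Prop where
  min_le_map_add : ∀ α β : Γ, α ≠ 0 → β ≠ 0 → α + β ≠ 0 → min (ψ α) (ψ β) ≤ ψ (α + β)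
  map_zsmul : ∀ (α : Γ) (k : ℤ), α ≠ 0 → k ≠ 0 → ψ (k • α) = ψ α
  map_lt_add_map : ∀ α β : Γ, 0 < α → β ≠ 0 → ψ β < α + ψ α

def IsAsymptoticIntegral (ψ int : Γ → Γ) : Prop :=
  ∀ α : Γ, int α ≠ 0 ∧ int α + ψ (int α) = α

namespace IsAsymptoticCouple_s15

variable {ψ : Γ → Γ} (hψ : IsAsymptoticCouple_s15 ψ) {α β : Γ}
include hψ

theorem map_neg (hβ : β ≠ 0) : ψ (-β) = ψ β := by
  simpa using hψ.map_zsmul β (-1) hβ (by norm_num)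

theorem map_add_of_map_lt (hα : α ≠ 0) (hβ : β ≠ 0) (hlt : ψ α < ψ β) :
    ψ (α + β) = ψ α := by
  have hαβ : α + β ≠ 0 := by
    intro h
    rw [eq_neg_of_add_eq_zero_right h, hψ.map_neg hα] at hlt
    exact hlt.false
  have hge : ψ α ≤ ψ (α + β) := by
    simpa [min_eq_left hlt.le] using hψ.min_le_map_add α β hα hβ hαβ
  have hle : min (ψ (α + β)) (ψ β) ≤ ψ α := by
    simpa [hψ.map_neg hβ] using
      hψ.min_le_map_add (α + β) (-β) hαβ (neg_ne_zero.mpr hβ) (by simpa using hα)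
  exact le_antisymm ((min_le_iff.mp hle).resolve_right hlt.not_ge) hge

variable [IsOrderedAddMonoid Γ]

theorem strictMonoOn_add_map : StrictMonoOn (fun γ => γ + ψ γ) {0}ᶜ := by
  intro α hα β hβ hlt
  rcases le_or_gt (ψ α) (ψ β) with h | h
  · exact add_lt_add_of_lt_of_le hlt h
  · have hδ : β - α ≠ 0 := sub_ne_zero.mpr hlt.ne'
    have hmin : min (ψ α) (ψ (β - α)) ≤ ψ β := by
      simpa using hψ.min_le_map_add α (β - α) hα hδ (by simpa using hβ)
    have hψδ : ψ (β - α) ≤ ψ β := (min_le_iff.mp hmin).resolve_left h.not_ge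
    calc α + ψ α < α + ((β - α) + ψ (β - α)) :=
          add_lt_add_right (hψ.map_lt_add_map _ α (sub_pos.mpr hlt) hα) α
      _ ≤ α + ((β - α) + ψ β) := by gcongr
      _ = β + ψ β := by abel

variable {int : Γ → Γ} (hint : IsAsymptoticIntegral ψ int)
include hint

theorem int_eq_of_add_map_eq {γ : Γ} (hγ : γ ≠ 0) (h : γ + ψ γ = α) : int α = γ :=
  hψ.strictMonoOn_add_map.injOn (hint α).1 hγ (by simp only [(hint α).2, h])

theorem int_le_int_iff : int α ≤ int β ↔ α ≤ β := by
  simpa only [(hint α).2, (hint β).2] using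
    (hψ.strictMonoOn_add_map.le_iff_le (hint α).1 (hint β).1).symm

theorem int_lt_int_iff : int α < int β ↔ α < β := by
  simpa only [(hint α).2, (hint β).2] using
    (hψ.strictMonoOn_add_map.lt_iff_lt (hint α).1 (hint β).1).symm

omit [IsOrderedAddMonoid Γ] in
theorem int_map_neg (hα : α ≠ 0) : int (ψ α) < 0 := by
  refine lt_of_le_of_ne (not_lt.mp fun hpos => ?_) (hint (ψ α)).1
  have := hψ.map_lt_add_map _ α hpos hα
  rw [(hint (ψ α)).2] at this
  exact this.false

theorem int_add_map_sub_int_map {γ : Γ} (hγ : γ ≠ 0) :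
    int (γ + ψ γ - int (ψ γ)) = γ - int (ψ γ) := by
  set c := int (ψ γ)
  have hc : c ≠ 0 := (hint (ψ γ)).1
  have hψc : ψ γ < ψ c := by
    calc ψ γ = c + ψ c := (hint (ψ γ)).2.symm
      _ < ψ c := add_lt_of_neg_left _ (hψ.int_map_neg hint hγ)
  have hsub : ψ (γ - c) = ψ γ := by
    rw [sub_eq_add_neg]
    exact hψ.map_add_of_map_lt hγ (neg_ne_zero.mpr hc) (by rwa [hψ.map_neg hc])
  have hγc : γ - c ≠ 0 := sub_ne_zero.mpr fun h => by rw [h] at hψc; exact hψc.false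
  exact hψ.int_eq_of_add_map_eq hint hγc (by rw [hsub]; abel)

theorem ordConnected_image_int {S : Set Γ} (hS : S.OrdConnected)
    (hsign : (∀ α ∈ S, 0 < int α) ∨ (∀ α ∈ S, int α < 0)) : (int '' S).OrdConnected := by
  refine ⟨?_⟩
  rintro _ ⟨a, ha, rfl⟩ _ ⟨b, hb, rfl⟩ c ⟨hac, hcb⟩
  have hc : c ≠ 0 := by
    rcases hsign with hpos | hneg
    · exact ((hpos a ha).trans_le hac).ne'
    · exact (hcb.trans_lt (hneg b hb)).ne
  refine ⟨c + ψ c, hS.out ha hb ⟨?_, ?_⟩, hψ.int_eq_of_add_map_eq hint hc rfl⟩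
  · rw [← (hint a).2]
    exact hψ.strictMonoOn_add_map.monotoneOn (hint a).1 hc hac
  · rw [← (hint b).2]
    exact hψ.strictMonoOn_add_map.monotoneOn hc (hint b).1 hcb

end IsAsymptoticCouple_s15

end

theorem stmt_15_general {Γ : Type*} [AddCommGroup Γ] [LinearOrder Γ] [IsOrderedAddMonoid Γ] (ψ : Γ → Γ)
    (AC1 : ∀ α β : Γ, α ≠ 0 → β ≠ 0 → α + β ≠ 0 → min (ψ α) (ψ β) ≤ ψ (α + β))
    (AC2 : ∀ (α : Γ) (k : ℤ), α ≠ 0 → k ≠ 0 → ψ (k • α) = ψ α)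
    (AC3 : ∀ α β : Γ, 0 < α → β ≠ 0 → ψ β < α + ψ α)
    (int : Γ → Γ)
    (hint : ∀ α : Γ, int α ≠ 0 ∧ int α + ψ (int α) = α)
    (χ : Γ → Γ) (hχ : ∀ γ : Γ, γ ≠ 0 → χ γ = int (ψ γ))
    (S : Set Γ) (hS : S.Nonempty)
    (hconv : ∀ a ∈ S, ∀ b ∈ S, ∀ c : Γ, a ≤ c → c ≤ b → c ∈ S)
    (hnomax : ¬ ∃ m ∈ S, ∀ x ∈ S, x ≤ m)
    (hsub : (∀ α ∈ S, ∃ γ : Γ, 0 < γ ∧ γ + ψ γ = α) ∨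
            (∀ α ∈ S, ∃ γ : Γ, γ < 0 ∧ γ + ψ γ = α))
    (hdy : ∃ β ∈ S, ∀ γ ∈ S, β < γ →
      γ - int (ψ (int γ)) ∈ S ∧ β < γ - int (ψ (int γ))) :
    (int '' S).Nonempty ∧
    (∀ a ∈ int '' S, ∀ b ∈ int '' S, ∀ c : Γ, a ≤ c → c ≤ b → c ∈ int '' S) ∧
    (¬ ∃ m ∈ int '' S, ∀ x ∈ int '' S, x ≤ m) ∧
    (∃ β ∈ int '' S, ∀ γ ∈ int '' S, β < γ → γ - χ γ ∈ int '' S) := by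
  have hψ : IsAsymptoticCouple_s15 ψ := ⟨AC1, AC2, AC3⟩
  have hsign : (∀ α ∈ S, 0 < int α) ∨ (∀ α ∈ S, int α < 0) := by
    refine hsub.imp (fun h α hα => ?_) (fun h α hα => ?_) <;>
      obtain ⟨γ, hγ, rfl⟩ := h α hα
    · rwa [hψ.int_eq_of_add_map_eq hint hγ.ne' rfl]
    · rwa [hψ.int_eq_of_add_map_eq hint hγ.ne rfl]
  have hconv' := hψ.ordConnected_image_int hint ⟨fun a ha b hb c hc => hconv a ha b hb c hc.1 hc.2⟩
    hsign
  refine ⟨hS.image int, fun a ha b hb c hac hcb => hconv'.out ha hb ⟨hac, hcb⟩, ?_, ?_⟩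
  · rintro ⟨_, ⟨s, hs, rfl⟩, hmax⟩
    exact hnomax ⟨s, hs, fun x hx => (hψ.int_le_int_iff hint).1 (hmax _ (mem_image_of_mem _ hx))⟩
  · obtain ⟨β, hβ, hstep⟩ := hdy
    refine ⟨int β, mem_image_of_mem _ hβ, ?_⟩
    rintro _ ⟨g, hg, rfl⟩ hlt
    have hg' := (hstep g hg ((hψ.int_lt_int_iff hint).1 hlt)).1
    rw [hχ _ (hint g).1, ← hψ.int_add_map_sub_int_map hint (hint g).1, (hint g).2]
    exact mem_image_of_mem _ hg'

/-- Let `(Γ, ψ)` be an H-asymptotic couple with asymptotic integration and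
`S ⊆ Γ` nonempty, convex, without a greatest element, with `S ⊆ (Γ^{>0})'` or
`S ⊆ (Γ^{<0})'`, having the derived yardstick property. Then `∫S = int '' S` is
nonempty, convex, has no greatest element, and has the yardstick property. Here `int α`
is the unique nonzero `β` with `β + ψ β = α`, `s γ = ψ (int γ)` (so `∫ s γ` is
`int (ψ (int γ))`), and `χ` is the contraction map. -/
theorem stmt_15 {Γ : Type*} [AddCommGroup Γ] [LinearOrder Γ] [IsOrderedAddMonoid Γ] (ψ : Γ → Γ)
    (AC1 : ∀ α β : Γ, α ≠ 0 → β ≠ 0 → α + β ≠ 0 → min (ψ α) (ψ β) ≤ ψ (α + β))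
    (AC2 : ∀ (α : Γ) (k : ℤ), α ≠ 0 → k ≠ 0 → ψ (k • α) = ψ α)
    (AC3 : ∀ α β : Γ, 0 < α → β ≠ 0 → ψ β < α + ψ α)
    (HC : ∀ α β : Γ, 0 < α → α ≤ β → ψ β ≤ ψ α)
    (int : Γ → Γ)
    (hint : ∀ α : Γ, int α ≠ 0 ∧ int α + ψ (int α) = α)
    (χ : Γ → Γ) (hχ0 : χ 0 = 0) (hχ : ∀ γ : Γ, γ ≠ 0 → χ γ = int (ψ γ))
    (S : Set Γ) (hS : S.Nonempty)
    (hconv : ∀ a ∈ S, ∀ b ∈ S, ∀ c : Γ, a ≤ c → c ≤ b → c ∈ S)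
    (hnomax : ¬ ∃ m ∈ S, ∀ x ∈ S, x ≤ m)
    (hsub : (∀ α ∈ S, ∃ γ : Γ, 0 < γ ∧ γ + ψ γ = α) ∨
            (∀ α ∈ S, ∃ γ : Γ, γ < 0 ∧ γ + ψ γ = α))
    (hdy : ∃ β ∈ S, ∀ γ ∈ S, β < γ →
      γ - int (ψ (int γ)) ∈ S ∧ β < γ - int (ψ (int γ))) :
    (int '' S).Nonempty ∧
    (∀ a ∈ int '' S, ∀ b ∈ int '' S, ∀ c : Γ, a ≤ c → c ≤ b → c ∈ int '' S) ∧
    (¬ ∃ m ∈ int '' S, ∀ x ∈ int '' S, x ≤ m) ∧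
    (∃ β ∈ int '' S, ∀ γ ∈ int '' S, β < γ → γ - χ γ ∈ int '' S) :=
  stmt_15_general ψ AC1 AC2 AC3 int hint χ hχ S hS hconv hnomax hsub hdy
end

section
/- Let K be a valued field, L an immediate valued field extension of K, a ∈ L∖K, and (a_ρ) a pc-sequence in K of transcendental type over K with a_ρ ⇝ a. Let R(X) ∈ K(X)∖K be a nonconstant rational function. Then eventually R(a_ρ) is defined and lies in K, R(a_ρ) ⇝ R(a), and (R(a_ρ)) is a divergent pc-sequence in K (it has no pseudolimit in K). -/
/-!
Write `R = N / D` and `W i = D * N⁽ⁱ⁾ - D⁽ⁱ⁾ * N ∈ K[X]` with Hasse derivatives `⁽ⁱ⁾`. Taylor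
expansion at `a ρ` gives `R b - R (a ρ) = (∑_{i ≥ 1} W i (a ρ) * (b - a ρ) ^ i) / (D b * D (a ρ))`.
By transcendental type every `v (W i (a ρ))` is eventually a constant `e i`, nonzero when `W i ≠ 0`,
and some `W i` with `i ≥ 1` is nonzero since `R` is not constant. As `w (b - a ρ)` is eventually
strictly decreasing, the values `e i * w (b - a ρ) ^ i` are eventually pairwise distinct, so the
largest of them is the valuation of the sum, and it strictly decreases (Kaplansky's argument).
Applied to `R = P` the same computation shows that `b` is transcendental over `K`, so `D b ≠ 0`.
Finally, for `c ∈ K` the valuation of `c - R (a ρ) = (c * D - N) (a ρ) / D (a ρ)` is eventually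
constant, so `c` is not a pseudolimit.
-/

open Filter Polynomial

section Eventually

variable {I α : Type*} [LinearOrder I]

theorem eventually_atTop_iff_exists_gt [Nonempty I] [NoMaxOrder I] {p : I → Prop} :
    (∀ᶠ ρ in atTop, p ρ) ↔ ∃ ρ₀, ∀ ρ, ρ₀ < ρ → p ρ := by
  simp [atTop_basis_Ioi.eventually_iff]

def EventuallyStrictAnti [Preorder α] (f : I → α) : Prop :=
  ∀ᶠ ρ in atTop, ∀ σ, ρ < σ → f σ < f ρ

namespace EventuallyStrictAnti

variable [Preorder α] {f g : I → α}

theorem congr (hf : EventuallyStrictAnti f) (hfg : f =ᶠ[atTop] g) : EventuallyStrictAnti g := by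
  filter_upwards [hf, eventually_forall_ge_atTop.2 hfg] with ρ hρ hfgρ σ hσ
  rw [← hfgρ ρ le_rfl, ← hfgρ σ hσ.le]
  exact hρ σ hσ

theorem eventually_ne [Nonempty I] [NoMaxOrder I] (hf : EventuallyStrictAnti f) (c : α) :
    ∀ᶠ ρ in atTop, f ρ ≠ c := by
  obtain ⟨ρ₀, hρ₀⟩ := eventually_atTop.1 hf
  by_cases h : ∃ ρ₁, ρ₀ ≤ ρ₁ ∧ f ρ₁ = c
  · obtain ⟨ρ₁, hρ₁, rfl⟩ := h
    filter_upwards [eventually_gt_atTop ρ₁] with ρ hρ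
    exact (hρ₀ ρ₁ hρ₁ ρ hρ).ne
  · push Not at h
    filter_upwards [eventually_ge_atTop ρ₀] with ρ hρ
    exact h ρ hρ

theorem not_eventually_eq [Nonempty I] [NoMaxOrder I] (hf : EventuallyStrictAnti f) (c : α) :
    ¬ ∀ᶠ ρ in atTop, f ρ = c := fun h =>
  let ⟨_, hne, heq⟩ := ((hf.eventually_ne c).and h).exists
  hne heq

theorem finset_sup' {α ι : Type*} [LinearOrder α] {s : Finset ι} (hs : s.Nonempty)
    {f : ι → I → α} (hf : ∀ i ∈ s, EventuallyStrictAnti (f i)) :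
    EventuallyStrictAnti fun ρ => s.sup' hs fun i => f i ρ := by
  filter_upwards [(Finset.eventually_all s).2 hf] with ρ hρ σ hσ
  exact (Finset.sup'_lt_iff hs).2 fun i hi =>
    (hρ i hi σ hσ).trans_le (Finset.le_sup' (fun i => f i ρ) hi)

variable {Γ₀ : Type*} [LinearOrderedCommGroupWithZero Γ₀] {γ : I → Γ₀}

theorem pow (hγ : EventuallyStrictAnti γ) {n : ℕ} (hn : n ≠ 0) :
    EventuallyStrictAnti fun ρ => γ ρ ^ n :=
  hγ.mono fun _ h σ hσ => pow_lt_pow_left₀ (h σ hσ) zero_le hn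

theorem const_mul (hγ : EventuallyStrictAnti γ) {c : Γ₀} (hc : c ≠ 0) :
    EventuallyStrictAnti fun ρ => c * γ ρ :=
  hγ.mono fun _ h σ hσ => mul_lt_mul_of_pos_left (h σ hσ) (zero_lt_iff.2 hc)

theorem div_const (hγ : EventuallyStrictAnti γ) {c : Γ₀} (hc : c ≠ 0) :
    EventuallyStrictAnti fun ρ => γ ρ / c :=
  hγ.mono fun _ h σ hσ => by
    simpa only [div_eq_mul_inv] using
      mul_lt_mul_of_pos_right (h σ hσ) (zero_lt_iff.2 (inv_ne_zero hc))

theorem eventually_mul_pow_ne [Nonempty I] [NoMaxOrder I] (hγ : EventuallyStrictAnti γ)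
    (e : Γ₀) {e' : Γ₀} (he' : e' ≠ 0) {i j : ℕ} (hij : i < j) :
    ∀ᶠ ρ in atTop, e * γ ρ ^ i ≠ e' * γ ρ ^ j := by
  filter_upwards [((hγ.pow (Nat.sub_ne_zero_of_lt hij)).const_mul he').eventually_ne e,
    hγ.eventually_ne 0] with ρ hne h0 heq
  refine hne (mul_right_cancel₀ (pow_ne_zero i h0) ?_)
  rw [mul_assoc, ← pow_add, Nat.sub_add_cancel hij.le, heq]

end EventuallyStrictAnti

end Eventually

theorem Valuation.map_sum_eq_sup' {R Γ₀ ι : Type*} [Ring R] [LinearOrderedCommGroupWithZero Γ₀]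
    (w : Valuation R Γ₀) {s : Finset ι} (hs : s.Nonempty) {f : ι → R}
    (hf : Set.InjOn (fun i => w (f i)) s) :
    w (∑ i ∈ s, f i) = s.sup' hs fun i => w (f i) := by
  classical
  obtain ⟨j, hj, hmax⟩ := s.exists_max_image (fun i => w (f i)) hs
  rw [w.map_sum_eq_of_lt hj fun i hi => ?_]
  · exact le_antisymm (Finset.le_sup' (fun i => w (f i)) hj) (Finset.sup'_le hs _ hmax)
  · obtain ⟨his, hij⟩ := Finset.mem_sdiff.1 hi
    exact (hmax i his).lt_of_ne fun h => Finset.notMem_singleton.1 hij (hf his hj h)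

namespace Polynomial

variable {R S : Type*} [CommRing R] [CommRing S]

theorem hasseDeriv_map (f : R →+* S) (k : ℕ) (p : R[X]) :
    hasseDeriv k (p.map f) = (hasseDeriv k p).map f := by
  ext n
  simp [hasseDeriv_coeff]

theorem eq_C_of_hasseDeriv_eq_zero {p : R[X]} (h : ∀ i ≠ 0, hasseDeriv i p = 0) :
    p = C (p.coeff 0) := by
  ext (_ | n)
  · simp
  · simpa [hasseDeriv_coeff] using congrArg (coeff · 0) (h (n + 1) n.succ_ne_zero)

theorem eval_eq_sum_range_hasseDeriv (p : R[X]) (x y : R) {n : ℕ} (hp : p.natDegree ≤ n) :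
    p.eval y = ∑ i ∈ Finset.range (n + 1), (hasseDeriv i p).eval x * (y - x) ^ i := by
  rw [← taylor_eval_sub (r := x), eval_eq_sum_range' (n := n + 1) (by rw [natDegree_taylor]; omega)]
  simp only [taylor_coeff]

noncomputable def hasseWronskian (i : ℕ) (p q : R[X]) : R[X] :=
  p * hasseDeriv i q - hasseDeriv i p * q

theorem hasseWronskian_map (f : R →+* S) (i : ℕ) (p q : R[X]) :
    hasseWronskian i (p.map f) (q.map f) = (hasseWronskian i p q).map f := by
  simp [hasseWronskian, hasseDeriv_map]

theorem hasseWronskian_eq_zero_of_lt {i : ℕ} {p q : R[X]} (hp : p.natDegree < i)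
    (hq : q.natDegree < i) : hasseWronskian i p q = 0 := by
  simp [hasseWronskian, hasseDeriv_eq_zero_of_lt_natDegree _ _ hp,
    hasseDeriv_eq_zero_of_lt_natDegree _ _ hq]

theorem eval_mul_eval_sub_eq_sum_hasseWronskian (p q : R[X]) (x y : R) {n : ℕ}
    (hp : p.natDegree ≤ n) (hq : q.natDegree ≤ n) :
    p.eval x * q.eval y - q.eval x * p.eval y =
      ∑ i ∈ (Finset.range (n + 1)).erase 0, (hasseWronskian i p q).eval x * (y - x) ^ i := by
  rw [Finset.sum_erase _ (by simp [hasseWronskian]), eval_eq_sum_range_hasseDeriv p x y hp,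
    eval_eq_sum_range_hasseDeriv q x y hq, Finset.mul_sum, Finset.mul_sum,
    ← Finset.sum_sub_distrib]
  refine Finset.sum_congr rfl fun i _ => ?_
  simp only [hasseWronskian, eval_sub, eval_mul]
  ring

variable {K : Type*} [Field K]

/- If all `hasseWronskian i p q` with `i ≠ 0` vanish, then `p ∣ p⁽ⁱ⁾ * q` forces `p⁽ⁱ⁾ = 0` for
degree reasons, so `p` is constant, and then so is `q`. -/
theorem exists_hasseWronskian_ne_zero {p q : K[X]} (hpq : IsCoprime p q) (hp : p ≠ 0)
    (hq : ∀ c, q ≠ C c * p) : ∃ i ≠ 0, hasseWronskian i p q ≠ 0 := by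
  by_contra! h
  have hp' : ∀ i ≠ 0, hasseDeriv i p = 0 := by
    intro i hi
    by_contra hne
    have hdvd : p ∣ hasseDeriv i p :=
      hpq.dvd_of_dvd_mul_right ⟨_, (sub_eq_zero.1 (h i hi)).symm⟩
    have := natDegree_le_of_dvd hdvd hne
    have := natDegree_hasseDeriv_le p i
    exact hne (hasseDeriv_eq_zero_of_lt_natDegree p i (by omega))
  have hq' : ∀ i ≠ 0, hasseDeriv i q = 0 := fun i hi => by
    simpa [hasseWronskian, hp' i hi, hp] using h i hi
  have hp0 : p.coeff 0 ≠ 0 := fun h0 =>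
    hp (by rw [eq_C_of_hasseDeriv_eq_zero hp', h0, C_0])
  refine hq (q.coeff 0 / p.coeff 0) ?_
  rw [eq_C_of_hasseDeriv_eq_zero hq']
  nth_rw 2 [eq_C_of_hasseDeriv_eq_zero hp']
  rw [← C_mul, div_mul_cancel₀ _ hp0, coeff_C_zero]

end Polynomial

namespace Valuation

variable {I R Γ₀ : Type*} [LinearOrder I] [LinearOrderedCommGroupWithZero Γ₀]

section Ring

variable [Ring R] (v : Valuation R Γ₀)

/- The valuation is multiplicative, so `x ρ ⇝ y` says that `v (y - x ρ)` eventually strictly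
decreases. -/
def PseudoConverges (x : I → R) (y : R) : Prop :=
  EventuallyStrictAnti fun ρ => v (y - x ρ)

def IsPseudoCauchy (x : I → R) : Prop :=
  ∀ᶠ ρ in atTop, ∀ σ τ, ρ < σ → σ < τ → v (x τ - x σ) < v (x σ - x ρ)

variable {v}

theorem PseudoConverges.eventually_ne [Nonempty I] [NoMaxOrder I] {x : I → R} {y : R}
    (h : v.PseudoConverges x y) (c : R) : ∀ᶠ ρ in atTop, x ρ ≠ c :=
  (EventuallyStrictAnti.eventually_ne h (v (y - c))).mono fun _ hρ hx => hρ (by rw [hx])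

/- Two of the functions `e i * v (z ρ) ^ i` agree at most once, so eventually a single term of
the sum has the largest valuation. -/
theorem eventuallyStrictAnti_map_sum [Nonempty I] [NoMaxOrder I] {s : Finset ℕ}
    (hs : s.Nonempty) (hs0 : 0 ∉ s) {c : ℕ → I → R}
    (hc : ∀ i ∈ s, ∃ e ≠ 0, ∀ᶠ ρ in atTop, v (c i ρ) = e) {z : I → R}
    (hz : EventuallyStrictAnti fun ρ => v (z ρ)) :
    EventuallyStrictAnti fun ρ => v (∑ i ∈ s, c i ρ * z ρ ^ i) := by
  choose! e he hce using hc
  have hterm : ∀ i ∈ s, EventuallyStrictAnti fun ρ => e i * v (z ρ) ^ i := fun i hi =>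
    (hz.pow (ne_of_mem_of_not_mem hi hs0)).const_mul (he i hi)
  refine (EventuallyStrictAnti.finset_sup' hs hterm).congr ?_
  have hdistinct : ∀ᶠ ρ in atTop, ∀ i ∈ s, ∀ j ∈ s, i < j →
      e i * v (z ρ) ^ i ≠ e j * v (z ρ) ^ j := by
    simp only [Finset.eventually_all, eventually_imp_distrib_left]
    exact fun i _ j hj hij => hz.eventually_mul_pow_ne (e i) (he j hj) hij
  filter_upwards [hdistinct, (Finset.eventually_all s).2 hce] with ρ hρ hcρ
  have hval : ∀ i ∈ s, v (c i ρ * z ρ ^ i) = e i * v (z ρ) ^ i := fun i hi => by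
    rw [map_mul, map_pow, hcρ i hi]
  rw [v.map_sum_eq_sup' hs, Finset.sup'_congr hs rfl hval]
  intro i hi j hj hij
  simp only [hval i hi, hval j hj] at hij
  by_contra hne
  rcases lt_or_gt_of_ne hne with h | h
  · exact hρ i hi j hj h hij
  · exact hρ j hj i hi h hij.symm

theorem PseudoConverges.eventually_map_sub_eq {x : I → R} {y : R} (h : v.PseudoConverges x y) :
    ∀ᶠ ρ in atTop, ∀ σ, ρ < σ → v (x σ - x ρ) = v (y - x ρ) :=
  h.mono fun ρ hρ σ hσ => by
    rw [show x σ - x ρ = (y - x ρ) - (y - x σ) by abel, v.map_sub_eq_of_lt_left (hρ σ hσ)]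

theorem PseudoConverges.isPseudoCauchy {x : I → R} {y : R} (h : v.PseudoConverges x y) :
    v.IsPseudoCauchy x := by
  filter_upwards [h, eventually_forall_ge_atTop.2 h.eventually_map_sub_eq]
    with ρ hρ hsub σ τ hρσ hστ
  rw [hsub σ hρσ.le τ hστ, hsub ρ le_rfl σ hρσ]
  exact hρ σ hρσ

end Ring

def IsTranscendentalType [CommRing R] (v : Valuation R Γ₀) (x : I → R) : Prop :=
  ∀ P : R[X], 1 ≤ P.degree → ∃ c, ∀ᶠ ρ in atTop, v (P.eval (x ρ)) = c

end Valuation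

section TranscendentalType

open Valuation

variable {I K L Γ₀ : Type*} [LinearOrder I] [Nonempty I] [NoMaxOrder I] [Field K] [Field L]
  [Algebra K L] [LinearOrderedCommGroupWithZero Γ₀] {v : Valuation K Γ₀} {w : Valuation L Γ₀}
  {a : I → K} {b : L}

theorem Valuation.PseudoConverges.eventually_eval_ne_zero
    (ha : w.PseudoConverges (fun ρ => algebraMap K L (a ρ)) b) {P : K[X]} (hP : P ≠ 0) :
    ∀ᶠ ρ in atTop, P.eval (a ρ) ≠ 0 := by
  filter_upwards [(eventually_all_finite (finite_setOfPred_isRoot hP)).2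
    fun r _ => ha.eventually_ne (algebraMap K L r)] with ρ hρ h0
  exact hρ (a ρ) h0 rfl

theorem Valuation.IsTranscendentalType.exists_eventually_valuation_eval_eq
    (ht : v.IsTranscendentalType a) (ha : w.PseudoConverges (fun ρ => algebraMap K L (a ρ)) b)
    {P : K[X]} (hP : P ≠ 0) : ∃ e ≠ 0, ∀ᶠ ρ in atTop, v (P.eval (a ρ)) = e := by
  obtain ⟨e, he⟩ : ∃ e, ∀ᶠ ρ in atTop, v (P.eval (a ρ)) = e := by
    by_cases hdeg : 1 ≤ P.degree
    · exact ht P hdeg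
    · refine ⟨v (P.coeff 0), Eventually.of_forall fun ρ => ?_⟩
      rw [eq_C_of_degree_le_zero (Order.le_of_lt_succ (not_le.1 hdeg)), eval_C, coeff_C_zero]
  obtain ⟨ρ, hρe, hρ0⟩ := (he.and (ha.eventually_eval_ne_zero hP)).exists
  exact ⟨e, hρe ▸ v.ne_zero_iff.2 hρ0, he⟩

theorem eventuallyStrictAnti_valuation_eval_mul_eval_sub
    (hext : ∀ x : K, w (algebraMap K L x) = v x) (ht : v.IsTranscendentalType a)
    (ha : w.PseudoConverges (fun ρ => algebraMap K L (a ρ)) b) {p q : K[X]} {i : ℕ}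
    (hi : i ≠ 0) (hpq : hasseWronskian i p q ≠ 0) :
    EventuallyStrictAnti fun ρ =>
      w (algebraMap K L (p.eval (a ρ)) * (q.map (algebraMap K L)).eval b -
        algebraMap K L (q.eval (a ρ)) * (p.map (algebraMap K L)).eval b) := by
  classical
  set n := p.natDegree + q.natDegree
  set s := ((Finset.range (n + 1)).erase 0).filter fun j => hasseWronskian j p q ≠ 0
    with hs_def
  have hs : i ∈ s := by
    simp only [s, Finset.mem_filter, Finset.mem_erase, Finset.mem_range]
    refine ⟨⟨hi, ?_⟩, hpq⟩
    by_contra! hin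
    exact hpq (hasseWronskian_eq_zero_of_lt (by omega) (by omega))
  have hsum : ∀ ρ, algebraMap K L (p.eval (a ρ)) * (q.map (algebraMap K L)).eval b -
      algebraMap K L (q.eval (a ρ)) * (p.map (algebraMap K L)).eval b =
      ∑ j ∈ s, algebraMap K L ((hasseWronskian j p q).eval (a ρ)) *
        (b - algebraMap K L (a ρ)) ^ j := by
    intro ρ
    rw [hs_def, Finset.sum_filter_of_ne (p := fun j => hasseWronskian j p q ≠ 0)
      fun j _ h hj => h (by rw [hj, eval_zero, map_zero, zero_mul])]
    simpa only [hasseWronskian_map, eval_map, eval₂_at_apply] using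
      eval_mul_eval_sub_eq_sum_hasseWronskian (p.map (algebraMap K L)) (q.map (algebraMap K L))
        (algebraMap K L (a ρ)) b (n := n) (natDegree_map_le.trans (Nat.le_add_right _ _))
        (natDegree_map_le.trans (Nat.le_add_left _ _))
  refine (eventuallyStrictAnti_map_sum ⟨i, hs⟩ (by simp [s])
    (c := fun j ρ => algebraMap K L ((hasseWronskian j p q).eval (a ρ))) (fun j hj => ?_) ha).congr
    (Eventually.of_forall fun ρ => congrArg w (hsum ρ).symm)
  obtain ⟨e, he, hev⟩ := ht.exists_eventually_valuation_eval_eq ha (Finset.mem_filter.1 hj).2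
  exact ⟨e, he, hev.mono fun ρ hρ => by rw [hext, hρ]⟩

theorem Valuation.IsTranscendentalType.transcendental
    (hext : ∀ x : K, w (algebraMap K L x) = v x) (ht : v.IsTranscendentalType a)
    (ha : w.PseudoConverges (fun ρ => algebraMap K L (a ρ)) b) : Transcendental K b := by
  refine transcendental_iff.2 fun P hPb => by_contra fun hP => ?_
  by_cases hconst : ∃ c, P = C c
  · obtain ⟨c, rfl⟩ := hconst
    rw [aeval_C, map_eq_zero_iff _ (algebraMap K L).injective] at hPb
    exact hP (by rw [hPb, C_0])
  push Not at hconst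
  obtain ⟨i, hi, hW⟩ := exists_hasseWronskian_ne_zero isCoprime_one_left one_ne_zero
    fun c => by simpa using hconst c
  obtain ⟨e, -, he⟩ := ht.exists_eventually_valuation_eval_eq ha hP
  refine (eventuallyStrictAnti_valuation_eval_mul_eval_sub hext ht ha hi hW).not_eventually_eq e ?_
  filter_upwards [he] with ρ hρ
  simp [eval_map_algebraMap, hPb, hext, hρ]

theorem RatFunc.num_ne_C_mul_denom {R : RatFunc K} (hR : ∀ c, R ≠ RatFunc.C c) (c : K) :
    R.num ≠ Polynomial.C c * R.denom := fun h => hR c <| by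
  rw [← R.num_div_denom, h, map_mul, mul_div_assoc,
    div_self (RatFunc.algebraMap_ne_zero R.denom_ne_zero), mul_one, RatFunc.algebraMap_C]

theorem pseudoConverges_eval_ratFunc (hext : ∀ x : K, w (algebraMap K L x) = v x)
    (ht : v.IsTranscendentalType a) (ha : w.PseudoConverges (fun ρ => algebraMap K L (a ρ)) b)
    {R : RatFunc K} (hR : ∀ c, R ≠ RatFunc.C c) :
    w.PseudoConverges (fun ρ => algebraMap K L (R.num.eval (a ρ) / R.denom.eval (a ρ)))
      ((R.num.map (algebraMap K L)).eval b / (R.denom.map (algebraMap K L)).eval b) := by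
  obtain ⟨i, hi, hW⟩ := exists_hasseWronskian_ne_zero (RatFunc.isCoprime_num_denom R).symm
    R.denom_ne_zero (RatFunc.num_ne_C_mul_denom hR)
  obtain ⟨d, hd, hDa⟩ := ht.exists_eventually_valuation_eval_eq ha R.denom_ne_zero
  have hDb : (R.denom.map (algebraMap K L)).eval b ≠ 0 := by
    rw [eval_map_algebraMap]
    exact mt (transcendental_iff.1 (ht.transcendental hext ha) _) R.denom_ne_zero
  refine ((eventuallyStrictAnti_valuation_eval_mul_eval_sub hext ht ha hi hW).div_const
    (mul_ne_zero (w.ne_zero_iff.2 hDb) hd)).congr ?_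
  filter_upwards [hDa, ha.eventually_eval_ne_zero R.denom_ne_zero] with ρ hρd hρ0
  rw [← hρd, ← hext, ← map_mul, ← map_div₀, map_div₀ (algebraMap K L),
    div_sub_div _ _ hDb ((_root_.map_ne_zero _).2 hρ0)]
  congr 1
  ring

theorem not_pseudoConverges_eval_ratFunc (ht : v.IsTranscendentalType a)
    (ha : w.PseudoConverges (fun ρ => algebraMap K L (a ρ)) b) {R : RatFunc K}
    (hR : ∀ c, R ≠ RatFunc.C c) (c : K) :
    ¬ v.PseudoConverges (fun ρ => R.num.eval (a ρ) / R.denom.eval (a ρ)) c := by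
  intro hc
  obtain ⟨m, -, hm⟩ := ht.exists_eventually_valuation_eval_eq ha
    (sub_ne_zero.2 (RatFunc.num_ne_C_mul_denom hR c).symm)
  obtain ⟨d, -, hd⟩ := ht.exists_eventually_valuation_eval_eq ha R.denom_ne_zero
  refine hc.not_eventually_eq (m / d) ?_
  filter_upwards [hm, hd, ha.eventually_eval_ne_zero R.denom_ne_zero] with ρ hρm hρd hρ0
  rw [← hρm, ← hρd, ← map_div₀, eval_sub, eval_mul, eval_C, sub_div, mul_div_cancel_right₀ _ hρ0]

end TranscendentalType

theorem stmt_17_general {K L : Type*} [Field K] [Field L] [Algebra K L]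
    {Γ₀ : Type*} [LinearOrderedCommGroupWithZero Γ₀]
    (v : Valuation K Γ₀) (w : Valuation L Γ₀)
    (hext : ∀ x : K, w (algebraMap K L x) = v x)
    -- (a ρ): a well-indexed sequence in K
    {I : Type*} [LinearOrder I] [Nonempty I] [NoMaxOrder I]
    (a : I → K)
    (b : L)
    -- a ρ ⇝ b
    (hlim : ∃ ρ₀ : I, ∀ ρ σ : I, ρ₀ < ρ → ρ < σ →
      w (b - algebraMap K L (a σ)) < w (b - algebraMap K L (a ρ)))
    -- (a ρ) is of transcendental type over K
    (htrans : ∀ P : Polynomial K, 1 ≤ P.degree →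
      ∃ (ρ₀ : I) (c : Γ₀), ∀ ρ : I, ρ₀ < ρ → v (P.eval (a ρ)) = c)
    -- R ∈ K(X)∖K
    (R : RatFunc K) (hR : ∀ c : K, R ≠ RatFunc.C c) :
    -- eventually R (a ρ) is defined
    (∃ ρ₀ : I, ∀ ρ : I, ρ₀ < ρ → R.denom.eval (a ρ) ≠ 0) ∧
    -- R (a ρ) ⇝ R b
    (∃ ρ₀ : I, ∀ ρ σ : I, ρ₀ < ρ → ρ < σ →
      w ((R.num.map (algebraMap K L)).eval b / (R.denom.map (algebraMap K L)).eval b -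
          algebraMap K L (R.num.eval (a σ) / R.denom.eval (a σ))) <
      w ((R.num.map (algebraMap K L)).eval b / (R.denom.map (algebraMap K L)).eval b -
          algebraMap K L (R.num.eval (a ρ) / R.denom.eval (a ρ)))) ∧
    -- (R (a ρ)) is a pc-sequence in K ...
    (∃ ρ₀ : I, ∀ ρ σ τ : I, ρ₀ < ρ → ρ < σ → σ < τ →
      v (R.num.eval (a τ) / R.denom.eval (a τ) - R.num.eval (a σ) / R.denom.eval (a σ)) <
      v (R.num.eval (a σ) / R.denom.eval (a σ) - R.num.eval (a ρ) / R.denom.eval (a ρ))) ∧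
    -- ... which is divergent in K: it has no pseudolimit in K
    (¬ ∃ c : K, ∃ ρ₀ : I, ∀ ρ σ : I, ρ₀ < ρ → ρ < σ →
      v (c - R.num.eval (a σ) / R.denom.eval (a σ)) <
      v (c - R.num.eval (a ρ) / R.denom.eval (a ρ))) := by
  have ha : w.PseudoConverges (fun ρ => algebraMap K L (a ρ)) b :=
    eventually_atTop_iff_exists_gt.2 (hlim.imp fun _ h ρ hρ σ => h ρ σ hρ)
  have ht : v.IsTranscendentalType a := fun P hP =>
    let ⟨ρ₀, c, h⟩ := htrans P hP
    ⟨c, eventually_atTop_iff_exists_gt.2 ⟨ρ₀, h⟩⟩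
  have hRa := pseudoConverges_eval_ratFunc hext ht ha hR
  have hRa_pc : v.IsPseudoCauchy fun ρ => R.num.eval (a ρ) / R.denom.eval (a ρ) := by
    refine hRa.isPseudoCauchy.mono fun _ h σ τ hρσ hστ => ?_
    simpa only [← hext, map_sub] using h σ τ hρσ hστ
  refine ⟨eventually_atTop_iff_exists_gt.1 (ha.eventually_eval_ne_zero R.denom_ne_zero),
    (eventually_atTop_iff_exists_gt.1 hRa).imp fun _ h ρ σ hρ => h ρ hρ σ,
    (eventually_atTop_iff_exists_gt.1 hRa_pc).imp fun _ h ρ σ τ hρ => h ρ hρ σ τ, ?_⟩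
  rintro ⟨c, hc⟩
  exact not_pseudoConverges_eval_ratFunc ht ha hR c
    (eventually_atTop_iff_exists_gt.2 (hc.imp fun _ h ρ hρ σ => h ρ σ hρ))

/-- Let `K` be a valued field, `L` an immediate valued field extension,
`b ∈ L∖K`, and `(a ρ)` a pc-sequence in `K` of transcendental type over `K` with
`a ρ ⇝ b`. Let `R ∈ K(X)∖K` be a nonconstant rational function. Then eventually
`R (a ρ)` is defined in `K`, `R (a ρ) ⇝ R b`, and `(R (a ρ))` is a divergent
pc-sequence in `K`. The valuation is multiplicative: `f ≺ g` iff `v f < v g`. -/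
theorem stmt_17 {K L : Type*} [Field K] [Field L] [Algebra K L]
    {Γ₀ : Type*} [LinearOrderedCommGroupWithZero Γ₀]
    (v : Valuation K Γ₀) (w : Valuation L Γ₀)
    (hext : ∀ x : K, w (algebraMap K L x) = v x)
    -- immediate extension: same value group and same residue field
    (hvalgrp : ∀ y : L, y ≠ 0 → ∃ x : K, x ≠ 0 ∧ w y = v x)
    (hres : ∀ y : L, w y ≤ 1 → ∃ x : K, w (y - algebraMap K L x) < 1)
    -- (a ρ): a well-indexed sequence in K
    {I : Type*} [LinearOrder I] [Nonempty I] [WellFoundedLT I] [NoMaxOrder I]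
    (a : I → K)
    -- b ∈ L∖K
    (b : L) (hb : ∀ x : K, b ≠ algebraMap K L x)
    -- (a ρ) is a pc-sequence in K
    (hpc : ∃ ρ₀ : I, ∀ ρ σ τ : I, ρ₀ < ρ → ρ < σ → σ < τ →
      v (a τ - a σ) < v (a σ - a ρ))
    -- a ρ ⇝ b
    (hlim : ∃ ρ₀ : I, ∀ ρ σ : I, ρ₀ < ρ → ρ < σ →
      w (b - algebraMap K L (a σ)) < w (b - algebraMap K L (a ρ)))
    -- (a ρ) is of transcendental type over K
    (htrans : ∀ P : Polynomial K, 1 ≤ P.degree →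
      ∃ (ρ₀ : I) (c : Γ₀), ∀ ρ : I, ρ₀ < ρ → v (P.eval (a ρ)) = c)
    -- R ∈ K(X)∖K
    (R : RatFunc K) (hR : ∀ c : K, R ≠ RatFunc.C c) :
    -- eventually R (a ρ) is defined
    (∃ ρ₀ : I, ∀ ρ : I, ρ₀ < ρ → R.denom.eval (a ρ) ≠ 0) ∧
    -- R (a ρ) ⇝ R b
    (∃ ρ₀ : I, ∀ ρ σ : I, ρ₀ < ρ → ρ < σ →
      w ((R.num.map (algebraMap K L)).eval b / (R.denom.map (algebraMap K L)).eval b -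
          algebraMap K L (R.num.eval (a σ) / R.denom.eval (a σ))) <
      w ((R.num.map (algebraMap K L)).eval b / (R.denom.map (algebraMap K L)).eval b -
          algebraMap K L (R.num.eval (a ρ) / R.denom.eval (a ρ)))) ∧
    -- (R (a ρ)) is a pc-sequence in K ...
    (∃ ρ₀ : I, ∀ ρ σ τ : I, ρ₀ < ρ → ρ < σ → σ < τ →
      v (R.num.eval (a τ) / R.denom.eval (a τ) - R.num.eval (a σ) / R.denom.eval (a σ)) <
      v (R.num.eval (a σ) / R.denom.eval (a σ) - R.num.eval (a ρ) / R.denom.eval (a ρ))) ∧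
    -- ... which is divergent in K: it has no pseudolimit in K
    (¬ ∃ c : K, ∃ ρ₀ : I, ∀ ρ σ : I, ρ₀ < ρ → ρ < σ →
      v (c - R.num.eval (a σ) / R.denom.eval (a σ)) <
      v (c - R.num.eval (a ρ) / R.denom.eval (a ρ))) :=
  stmt_17_general v w hext a b hlim htrans R hR
end

section
/- Let K be a pre-differential-valued field of H-type with small integration, i.e., I(K) = ∂𝔬 where 𝔬 is the maximal ideal of the valuation ring 𝒪. Then K is differential-valued: 𝒪 = C + 𝔬, where C is the constant field. -/
theorem stmt_18_general {K Γ : Type*} [Field K] [AddCommGroup Γ] [LinearOrder Γ]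
    (v : K → WithTop Γ)
    (d : K → K)
    (hd_add : ∀ a b : K, d (a + b) = d a + d b)
    -- small integration: I(K) = ∂𝔬
    (hsmallint : ∀ y : K,
      (∃ f : K, 0 ≤ v f ∧ v (d f) ≤ v y) ↔ (∃ ε : K, 0 < v ε ∧ d ε = y)) :
    ∀ f : K, 0 ≤ v f → ∃ c ε : K, d c = 0 ∧ 0 < v ε ∧ f = c + ε := by
  intro f hf
  -- `f' ∈ I(K)` since `f ∈ 𝒪`, so `f' = ε'` with `ε ∈ 𝔬`, and `f - ε` is a constant.
  obtain ⟨ε, hε, hdε⟩ := (hsmallint (d f)).mp ⟨f, hf, le_rfl⟩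
  refine ⟨f - ε, ε, ?_, hε, (sub_add_cancel f ε).symm⟩
  simpa [hdε] using map_sub (AddMonoidHom.mk' d hd_add) f ε

/-- Let `K` be a pre-differential-valued field of H-type with small
integration: `I(K) = ∂𝔬`. Then `K` is differential-valued: `𝒪 = C + 𝔬`. The (additive)
valuation is `v : K → WithTop Γ` with `v x = ⊤ ↔ x = 0`; `𝒪 = {f : 0 ≤ v f}`,
`𝔬 = {f : 0 < v f}`, `C = {f : d f = 0}`, and `I(K) = {y : y ≼ f' for some f ∈ 𝒪}`. -/
theorem stmt_18 {K Γ : Type*} [Field K] [AddCommGroup Γ] [LinearOrder Γ] [IsOrderedAddMonoid Γ]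
    (v : K → WithTop Γ)
    (hv0 : ∀ x : K, v x = ⊤ ↔ x = 0) (hv1 : v 1 = 0)
    (hvmul : ∀ x y : K, v (x * y) = v x + v y)
    (hvadd : ∀ x y : K, min (v x) (v y) ≤ v (x + y))
    -- ℚ ⊆ 𝒪 (valued differential field convention; char 0 residue field)
    (hQ : ∀ n : ℕ, n ≠ 0 → v (n : K) = 0)
    (d : K → K)
    (hd_add : ∀ a b : K, d (a + b) = d a + d b)
    (hd_mul : ∀ a b : K, d (a * b) = d a * b + a * d b)
    -- asymptotic field: for nonzero f, g ≺ 1: f ≺ g ↔ f' ≺ g'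
    (hasymp : ∀ f g : K, f ≠ 0 → g ≠ 0 → 0 < v f → 0 < v g →
      (v g < v f ↔ v (d g) < v (d f)))
    -- pre-differential-valued: f ≼ 1, g ≺ 1 (g ≠ 0) imply f' ≺ g† = g'/g
    (hpdv : ∀ f g : K, g ≠ 0 → 0 ≤ v f → 0 < v g → v (d g) < v g + v (d f))
    -- H-type: 0 < v f ≤ v g implies ψ(v f) ≥ ψ(v g), i.e. v(f')−v(f) ≥ v(g')−v(g)
    (hH : ∀ f g : K, f ≠ 0 → g ≠ 0 → 0 < v f → v f ≤ v g →
      v (d g) + v f ≤ v (d f) + v g)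
    -- small integration: I(K) = ∂𝔬
    (hsmallint : ∀ y : K,
      (∃ f : K, 0 ≤ v f ∧ v (d f) ≤ v y) ↔ (∃ ε : K, 0 < v ε ∧ d ε = y)) :
    ∀ f : K, 0 ≤ v f → ∃ c ε : K, d c = 0 ∧ 0 < v ε ∧ f = c + ε :=
  stmt_18_general v d hd_add hsmallint
end

section
/- Let K be a henselian pre-differential-valued field of H-type and s ∈ K with v(s) ∈ (Γ^{>0})′ and s ∉ ∂𝔬. Then the set S := {v(s − ε′) : ε ∈ K, ε ≺ 1} ⊆ (Γ^{>0})′ has no largest element and is downward closed in (Γ^{>0})′ (in particular, S is a convex subset of Γ). -/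
/-!
Write `′` for the derivation and `γ' := γ + ψ γ`. The key step: if `v t = δ ≥ β₀'` with
`β₀ > 0`, pick `g` with `v g = β := δ - ψ β₀`. H-type gives `β' ≤ δ`, so `u := t / g′ ≼ 1` and
`ε := u g ≺ 1`, and `t - ε′ = -u′ g` has value `> ψ β₀ + β = δ` by pre-differential-valuedness.
For `t = s - ε₀′` this shows that `S` has no largest element (as `s ∉ ∂𝔬`); for arbitrary `t`
it shows that `(Γ^{>0})'` is upward closed, which gives `S ⊆ (Γ^{>0})'` and reduces convexity to
downward closedness. The latter holds because subtracting `g′` with `v g = β` from `s - ε′`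
lowers the value to `β' < v (s - ε′)`.
-/

theorem ordConnected_of_forall_lt_mem {α : Type*} [PartialOrder α] {S T : Set α} (hST : S ⊆ T)
    (hT : IsUpperSet T) (hS : ∀ b ∈ S, ∀ c ∈ T, c < b → c ∈ S) : S.OrdConnected :=
  ⟨fun _ ha b hb c ⟨hac, hcb⟩ =>
    hcb.eq_or_lt.elim (fun h => h ▸ hb) fun h => hS b hb c (hT hac (hST ha)) h⟩

section AsymptoticCouple

variable {K Γ : Type*} [Field K] [AddCommGroup Γ] [LinearOrder Γ] [IsOrderedAddMonoid Γ]

/-- `(Γ^{>0})'`, the image of `Γ^{>0}` under `γ ↦ γ + ψ γ`. -/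
def posDerivImage (ψ : Γ → Γ) : Set Γ := {δ | ∃ β : Γ, 0 < β ∧ δ = β + ψ β}

/-- `ψ (v g) = v (g′ / g)` for `v g ≠ 0`, written without division. -/
def IsAsymptoticCoupleMap (v : AddValuation K (WithTop Γ)) (D : Derivation ℤ K K)
    (ψ : Γ → Γ) : Prop :=
  ∀ (g : K) (γ : Γ), γ ≠ 0 → v g = γ → v (D g) = ((γ + ψ γ : Γ) : WithTop Γ)

def IsPreDifferentialValued (v : AddValuation K (WithTop Γ)) (D : Derivation ℤ K K) : Prop :=
  ∀ f g : K, g ≠ 0 → 0 ≤ v f → 0 < v g → v (D g) < v g + v (D f)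

variable {v : AddValuation K (WithTop Γ)} {D : Derivation ℤ K K} {ψ : Γ → Γ}

theorem coe_psi_lt_val_deriv (hsurj : ∀ γ : Γ, ∃ x, v x = γ) (hψ : IsAsymptoticCoupleMap v D ψ)
    (hpdv : IsPreDifferentialValued v D) {u : K} (hu : 0 ≤ v u) {α : Γ} (hα : 0 < α) :
    (ψ α : WithTop Γ) < v (D u) := by
  obtain ⟨g, hg⟩ := hsurj α
  have hg0 : g ≠ 0 := by rintro rfl; simp at hg
  have h := hpdv u g hg0 hu (hg ▸ WithTop.coe_pos.2 hα)
  rw [hψ g α hα.ne' hg, hg, WithTop.coe_add] at h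
  exact (WithTop.add_lt_add_iff_left WithTop.coe_ne_top).1 h

theorem exists_pos_val_lt_val_sub_deriv (hsurj : ∀ γ : Γ, ∃ x, v x = γ)
    (hψ : IsAsymptoticCoupleMap v D ψ) (hpdv : IsPreDifferentialValued v D)
    (hH : AntitoneOn ψ (Set.Ioi 0)) {t : K} {δ β₀ : Γ} (ht : v t = δ) (hβ₀ : 0 < β₀)
    (hle : β₀ + ψ β₀ ≤ δ) : ∃ ε, 0 < v ε ∧ (δ : WithTop Γ) < v (t - D ε) := by
  set β := δ - ψ β₀
  have hβ₀β : β₀ ≤ β := le_sub_iff_add_le.2 hle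
  have hβ : 0 < β := hβ₀.trans_le hβ₀β
  have hβδ : β + ψ β ≤ δ := calc
    β + ψ β ≤ β + ψ β₀ := by gcongr; exact hH hβ₀ hβ hβ₀β
    _ = δ := sub_add_cancel δ (ψ β₀)
  obtain ⟨g, hg⟩ := hsurj β
  have hDg := hψ g β hβ.ne' hg
  have hDg0 : D g ≠ 0 := by
    intro h
    rw [h, v.map_zero] at hDg
    exact WithTop.top_ne_coe hDg
  set u := t / D g
  have hvu : v u = ↑(δ - (β + ψ β)) := by
    rw [v.map_div, ht, hDg, WithTop.LinearOrderedAddCommGroup.coe_sub]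
  have hu : 0 ≤ v u := hvu ▸ WithTop.coe_nonneg.2 (sub_nonneg.2 hβδ)
  have hsub : t - D (u * g) = -(D u * g) := by
    rw [Derivation.leibniz, smul_eq_mul, smul_eq_mul, div_mul_cancel₀ t hDg0]
    ring
  refine ⟨u * g, ?_, ?_⟩
  · rw [v.map_mul, hvu, hg, ← WithTop.coe_add, WithTop.coe_pos,
      show δ - (β + ψ β) + β = δ - ψ β by abel]
    exact sub_pos.2 ((lt_add_of_pos_left _ hβ).trans_le hβδ)
  · rw [hsub, v.map_neg, v.map_mul, hg]
    calc (δ : WithTop Γ) = ↑(ψ β₀) + ↑β := by rw [← WithTop.coe_add, add_sub_cancel]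
      _ < v (D u) + ↑β := WithTop.add_lt_add_right WithTop.coe_ne_top
        (coe_psi_lt_val_deriv hsurj hψ hpdv hu hβ₀)

theorem isUpperSet_posDerivImage (hsurj : ∀ γ : Γ, ∃ x, v x = γ)
    (hψ : IsAsymptoticCoupleMap v D ψ) (hpdv : IsPreDifferentialValued v D)
    (hH : AntitoneOn ψ (Set.Ioi 0)) : IsUpperSet (posDerivImage ψ) := by
  rintro _ c hle ⟨β₀, hβ₀, rfl⟩
  obtain ⟨t, ht⟩ := hsurj c
  obtain ⟨ε, hε, hlt⟩ := exists_pos_val_lt_val_sub_deriv hsurj hψ hpdv hH ht hβ₀ hle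
  have hDε : v (D ε) = c := ht ▸ v.map_eq_of_lt_sub (by rwa [v.map_sub_swap, ht])
  obtain ⟨α, hα⟩ := WithTop.ne_top_iff_exists.1 (v.ne_top_iff.2 fun h : ε = 0 => by
    simp [h] at hDε)
  have hαpos : 0 < α := WithTop.coe_pos.1 (hα ▸ hε)
  exact ⟨α, hαpos, WithTop.coe_injective ((hψ ε α hαpos.ne' hα.symm) ▸ hDε).symm⟩

theorem exists_le_of_val_sub_deriv (hψ : IsAsymptoticCoupleMap v D ψ) {s : K}
    (hs : ∃ γ : Γ, 0 < γ ∧ v s = ((γ + ψ γ : Γ) : WithTop Γ)) {ε : K} (hε : 0 < v ε) {δ : Γ}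
    (hδ : v (s - D ε) = δ) : ∃ β₀ : Γ, 0 < β₀ ∧ β₀ + ψ β₀ ≤ δ := by
  have hmin := hδ ▸ v.map_sub s (D ε)
  rcases le_total (v s) (v (D ε)) with h | h
  · obtain ⟨γ, hγ, hvs⟩ := hs
    rw [min_eq_left h, hvs] at hmin
    exact ⟨γ, hγ, WithTop.coe_le_coe.1 hmin⟩
  · rw [min_eq_right h] at hmin
    obtain ⟨e, he⟩ := WithTop.ne_top_iff_exists.1 (v.ne_top_iff.2 fun h : ε = 0 => by
      simp [h] at hmin)
    have hepos : 0 < e := WithTop.coe_pos.1 (he ▸ hε)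
    rw [hψ ε e hepos.ne' he.symm] at hmin
    exact ⟨e, hepos, WithTop.coe_le_coe.1 hmin⟩

theorem exists_val_sub_deriv_gt (hsurj : ∀ γ : Γ, ∃ x, v x = γ)
    (hψ : IsAsymptoticCoupleMap v D ψ) (hpdv : IsPreDifferentialValued v D)
    (hH : AntitoneOn ψ (Set.Ioi 0)) {s : K}
    (hs : ∃ γ : Γ, 0 < γ ∧ v s = ((γ + ψ γ : Γ) : WithTop Γ)) {ε : K} (hε : 0 < v ε) {δ : Γ}
    (hδ : v (s - D ε) = δ) : ∃ ε', 0 < v ε' ∧ (δ : WithTop Γ) < v (s - D ε') := by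
  obtain ⟨β₀, hβ₀, hle⟩ := exists_le_of_val_sub_deriv hψ hs hε hδ
  obtain ⟨ε₁, hε₁, hlt⟩ := exists_pos_val_lt_val_sub_deriv hsurj hψ hpdv hH hδ hβ₀ hle
  refine ⟨ε + ε₁, (lt_min hε hε₁).trans_le (v.map_add _ _), ?_⟩
  rwa [map_add, ← sub_sub]

theorem exists_val_sub_deriv_eq_of_lt (hsurj : ∀ γ : Γ, ∃ x, v x = γ)
    (hψ : IsAsymptoticCoupleMap v D ψ) {s ε : K} (hε : 0 < v ε) {γ β : Γ}
    (hγ : v (s - D ε) = γ) (hβ : 0 < β) (hlt : β + ψ β < γ) :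
    ∃ ε', 0 < v ε' ∧ v (s - D ε') = ((β + ψ β : Γ) : WithTop Γ) := by
  obtain ⟨g, hg⟩ := hsurj β
  have hDg := hψ g β hβ.ne' hg
  refine ⟨ε + g, (lt_min hε (hg ▸ WithTop.coe_pos.2 hβ)).trans_le (v.map_add _ _), ?_⟩
  have hlt' : v (D g) < v (s - D ε) := by
    rw [hγ, hDg]
    exact WithTop.coe_lt_coe.2 hlt
  rw [map_add, ← sub_sub, v.map_sub_eq_of_lt_right hlt', hDg]

end AsymptoticCouple

theorem stmt_19_general {K Γ : Type*} [Field K] [AddCommGroup Γ] [LinearOrder Γ] [IsOrderedAddMonoid Γ]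
    (v : K → WithTop Γ)
    (hv0 : ∀ x : K, v x = ⊤ ↔ x = 0) (hv1 : v 1 = 0)
    (hvmul : ∀ x y : K, v (x * y) = v x + v y)
    (hvadd : ∀ x y : K, min (v x) (v y) ≤ v (x + y))
    (hvsurj : ∀ γ : Γ, ∃ x : K, v x = (γ : WithTop Γ))
    (d : K → K)
    (hd_add : ∀ a b : K, d (a + b) = d a + d b)
    (hd_mul : ∀ a b : K, d (a * b) = d a * b + a * d b)
    -- pre-differential-valued
    (hpdv : ∀ f g : K, g ≠ 0 → 0 ≤ v f → 0 < v g → v (d g) < v g + v (d f))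
    -- the asymptotic couple map ψ: ψ(v g) = v(g†), i.e. v (d g) = v g + ψ (v g)
    (ψ : Γ → Γ)
    (hψ : ∀ (g : K) (γ : Γ), γ ≠ 0 → v g = (γ : WithTop Γ) →
      v (d g) = ((γ + ψ γ : Γ) : WithTop Γ))
    -- H-type
    (HC : ∀ α β : Γ, 0 < α → α ≤ β → ψ β ≤ ψ α)
    -- s ∈ K with v s ∈ (Γ^{>0})' and s ∉ ∂𝔬
    (s : K) (hs : ∃ γ : Γ, 0 < γ ∧ v s = ((γ + ψ γ : Γ) : WithTop Γ))
    (hsnotint : ¬ ∃ ε : K, 0 < v ε ∧ d ε = s) :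
    ∀ S : Set Γ,
      S = {γ : Γ | ∃ ε : K, 0 < v ε ∧ v (s - d ε) = (γ : WithTop Γ)} →
      -- S ⊆ (Γ^{>0})'
      (S ⊆ {δ : Γ | ∃ β : Γ, 0 < β ∧ δ = β + ψ β}) ∧
      -- S has no largest element
      (¬ ∃ m ∈ S, ∀ x ∈ S, x ≤ m) ∧
      -- S is downward closed in (Γ^{>0})'
      (∀ γ ∈ S, ∀ δ : Γ, δ < γ → (∃ β : Γ, 0 < β ∧ δ = β + ψ β) → δ ∈ S) ∧
      -- in particular, S is convex
      (∀ a ∈ S, ∀ b ∈ S, ∀ c : Γ, a ≤ c → c ≤ b → c ∈ S) := by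
  intro S hS
  let w : AddValuation K (WithTop Γ) := .of v ((hv0 0).2 rfl) hv1 hvadd hvmul
  let D : Derivation ℤ K K := .mk' (AddMonoidHom.mk' d hd_add).toIntLinearMap fun a b => by
    change d (a * b) = a * d b + b * d a
    rw [hd_mul]
    ring
  have hψ' : IsAsymptoticCoupleMap w D ψ := hψ
  have hpdv' : IsPreDifferentialValued w D := hpdv
  have hH : AntitoneOn ψ (Set.Ioi 0) := fun α hα β _ hαβ => HC α β hα hαβ
  have hupper := isUpperSet_posDerivImage hvsurj hψ' hpdv' hH
  have hsub : S ⊆ posDerivImage ψ := by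
    rw [hS]
    rintro δ ⟨ε, hε, hδ⟩
    obtain ⟨β₀, hβ₀, hle⟩ := exists_le_of_val_sub_deriv hψ' hs hε hδ
    exact hupper hle ⟨β₀, hβ₀, rfl⟩
  have hdown : ∀ γ ∈ S, ∀ δ ∈ posDerivImage ψ, δ < γ → δ ∈ S := by
    rw [hS]
    rintro γ ⟨ε, hε, hγ⟩ _ ⟨β, hβ, rfl⟩ hlt
    exact exists_val_sub_deriv_eq_of_lt hvsurj hψ' hε hγ hβ hlt
  refine ⟨hsub, ?_, fun γ hγ δ hlt hδ => hdown γ hγ δ hδ hlt, fun a ha b hb c hac hcb =>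
    (ordConnected_of_forall_lt_mem hsub hupper hdown).out ha hb ⟨hac, hcb⟩⟩
  rw [hS]
  rintro ⟨m, ⟨ε, hε, hm⟩, hmax⟩
  obtain ⟨ε', hε', hlt⟩ := exists_val_sub_deriv_gt hvsurj hψ' hpdv' hH hs hε hm
  obtain ⟨δ, hδ⟩ := WithTop.ne_top_iff_exists.1 (w.ne_top_iff.2
    (sub_ne_zero.2 fun h => hsnotint ⟨ε', hε', h.symm⟩))
  exact (hmax δ ⟨ε', hε', hδ.symm⟩).not_gt (WithTop.coe_lt_coe.1 (hδ ▸ hlt))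

/-- Let `K` be a henselian pre-differential-valued field of H-type with
value group `Γ` and asymptotic couple map `ψ`, and `s ∈ K` with `v s ∈ (Γ^{>0})'` and
`s ∉ ∂𝔬`. Then `S = {v (s − ε') : ε ≺ 1} ⊆ (Γ^{>0})'` has no largest element and is
downward closed in `(Γ^{>0})'`; in particular it is convex. The (additive) valuation is
`v : K → WithTop Γ`, surjective onto `Γ`, and `ψ : Γ → Γ` satisfies
`v (d g) = v g + ψ (v g)` for `g` with `v g ≠ 0, ⊤`. -/
theorem stmt_19 {K Γ : Type*} [Field K] [AddCommGroup Γ] [LinearOrder Γ] [IsOrderedAddMonoid Γ]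
    (v : K → WithTop Γ)
    (hv0 : ∀ x : K, v x = ⊤ ↔ x = 0) (hv1 : v 1 = 0)
    (hvmul : ∀ x y : K, v (x * y) = v x + v y)
    (hvadd : ∀ x y : K, min (v x) (v y) ≤ v (x + y))
    (hvsurj : ∀ γ : Γ, ∃ x : K, v x = (γ : WithTop Γ))
    (hQ : ∀ n : ℕ, n ≠ 0 → v (n : K) = 0)
    (d : K → K)
    (hd_add : ∀ a b : K, d (a + b) = d a + d b)
    (hd_mul : ∀ a b : K, d (a * b) = d a * b + a * d b)
    -- asymptotic field
    (hasymp : ∀ f g : K, f ≠ 0 → g ≠ 0 → 0 < v f → 0 < v g →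
      (v g < v f ↔ v (d g) < v (d f)))
    -- pre-differential-valued
    (hpdv : ∀ f g : K, g ≠ 0 → 0 ≤ v f → 0 < v g → v (d g) < v g + v (d f))
    -- the asymptotic couple map ψ: ψ(v g) = v(g†), i.e. v (d g) = v g + ψ (v g)
    (ψ : Γ → Γ)
    (hψ : ∀ (g : K) (γ : Γ), γ ≠ 0 → v g = (γ : WithTop Γ) →
      v (d g) = ((γ + ψ γ : Γ) : WithTop Γ))
    -- H-type
    (HC : ∀ α β : Γ, 0 < α → α ≤ β → ψ β ≤ ψ α)
    -- henselian valuation ring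
    (hhens : ∀ P : Polynomial K, (∀ i : ℕ, 0 ≤ v (P.coeff i)) →
      ∀ a : K, 0 ≤ v a → 0 < v (P.eval a) →
        v ((Polynomial.derivative P).eval a) = 0 →
        ∃ b : K, P.eval b = 0 ∧ 0 < v (b - a))
    -- s ∈ K with v s ∈ (Γ^{>0})' and s ∉ ∂𝔬
    (s : K) (hs : ∃ γ : Γ, 0 < γ ∧ v s = ((γ + ψ γ : Γ) : WithTop Γ))
    (hsnotint : ¬ ∃ ε : K, 0 < v ε ∧ d ε = s) :
    ∀ S : Set Γ,
      S = {γ : Γ | ∃ ε : K, 0 < v ε ∧ v (s - d ε) = (γ : WithTop Γ)} →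
      -- S ⊆ (Γ^{>0})'
      (S ⊆ {δ : Γ | ∃ β : Γ, 0 < β ∧ δ = β + ψ β}) ∧
      -- S has no largest element
      (¬ ∃ m ∈ S, ∀ x ∈ S, x ≤ m) ∧
      -- S is downward closed in (Γ^{>0})'
      (∀ γ ∈ S, ∀ δ : Γ, δ < γ → (∃ β : Γ, 0 < β ∧ δ = β + ψ β) → δ ∈ S) ∧
      -- in particular, S is convex
      (∀ a ∈ S, ∀ b ∈ S, ∀ c : Γ, a ≤ c → c ≤ b → c ∈ S) :=
  stmt_19_general v hv0 hv1 hvmul hvadd hvsurj d hd_add hd_mul hpdv ψ hψ HC s hs hsnotint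
end
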